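/- arXiv:2407.14453 — 5 statements merged into one kernel-verified Lean document; each statement's English description precedes it below -/
import Mathlib

section
/- For all vectors v, ω, ε, κ ∈ ℝ³, every real number a, every real 3×3 matrix J, and all symmetric real 3×3 matrices G and H, the following algebraic identity holds: ⟨v, κ × (G·ε) − ω × (a·v)⟩ + ⟨ω, (ε + e₃) × (G·ε) + κ × (H·κ) − ω × (J·ω)⟩ + ⟨ε, G·(κ × v + (ε + e₃) × ω)⟩ + ⟨κ, H·(κ × ω)⟩ = 0, where e₃ = (0,0,1). -/
open Matrix

noncomputable section

/-- The quadratic form associated with the transport matrix `𝒴` of the Timoshenko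
beam system vanishes pointwise. -/
theorem stmt9 (v ω ε κ : Fin 3 → ℝ) (a : ℝ)
    (J G H : Matrix (Fin 3) (Fin 3) ℝ) (hG : Gᵀ = G) (hH : Hᵀ = H) :
    v ⬝ᵥ (κ ⨯₃ G.mulVec ε - ω ⨯₃ (a • v)) +
      ω ⬝ᵥ ((ε + ![0, 0, 1]) ⨯₃ G.mulVec ε + κ ⨯₃ H.mulVec κ - ω ⨯₃ J.mulVec ω) +
      ε ⬝ᵥ G.mulVec (κ ⨯₃ v + (ε + ![0, 0, 1]) ⨯₃ ω) +
      κ ⬝ᵥ H.mulVec (κ ⨯₃ ω) = 0 := by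
  have hG01 : G 1 0 = G 0 1 := by conv_lhs => rw [← hG, Matrix.transpose_apply]
  have hG02 : G 2 0 = G 0 2 := by conv_lhs => rw [← hG, Matrix.transpose_apply]
  have hG12 : G 2 1 = G 1 2 := by conv_lhs => rw [← hG, Matrix.transpose_apply]
  have hH01 : H 1 0 = H 0 1 := by conv_lhs => rw [← hH, Matrix.transpose_apply]
  have hH02 : H 2 0 = H 0 2 := by conv_lhs => rw [← hH, Matrix.transpose_apply]
  have hH12 : H 2 1 = H 1 2 := by conv_lhs => rw [← hH, Matrix.transpose_apply]
  simp only [crossProduct, dotProduct, mulVec, Fin.sum_univ_three, Pi.add_apply,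
    Pi.sub_apply, Pi.smul_apply, smul_eq_mul, LinearMap.mk₂_apply, cons_val_zero,
    cons_val_one, head_cons, cons_val_two, tail_cons, head_fin_const]
  ring_nf
  rw [hG01, hG02, hG12, hH01, hH02, hH12]
  ring
end
end

section
/- Conservation of energy for the Timoshenko beam: let ρA > 0 and let G, H, J be symmetric real 3×3 matrices. Let v, ω, ε, κ : [0, L] × ℝ → ℝ³ be continuously differentiable fields satisfying, at every (S, t), the system (i) ∂(G·ε)/∂S + κ × (G·ε) − ω × (ρA·v) = ρA·∂v/∂t; (ii) ∂(H·κ)/∂S + κ × (H·κ) + (ε + e₃) × (G·ε) − ω × (J·ω) = J·∂ω/∂t; (iii) ∂v/∂S + κ × v + (ε + e₃) × ω = ∂ε/∂t; (iv) ∂ω/∂S + κ × ω = ∂κ/∂t, where e₃ = (0,0,1). Then at every time t the total energy satisfies d/dt ∫₀ᴸ (1/2)(ρA·⟨v, v⟩ + ⟨ω, J·ω⟩ + ⟨ε, G·ε⟩ + ⟨κ, H·κ⟩) dS = (⟨v, G·ε⟩ + ⟨ω, H·κ⟩)|_{S=L} − (⟨v, G·ε⟩ + ⟨ω, H·κ⟩)|_{S=0}.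 -/
open Matrix intervalIntegral

noncomputable section

/-- time partial derivative -/
noncomputable def pdt (f : ℝ → ℝ → Fin 3 → ℝ) (S t : ℝ) : Fin 3 → ℝ :=
  fderiv ℝ (fun p : ℝ × ℝ => f p.1 p.2) (S, t) (0, 1)

/-- space partial derivative -/
noncomputable def pds (f : ℝ → ℝ → Fin 3 → ℝ) (S t : ℝ) : Fin 3 → ℝ :=
  fderiv ℝ (fun p : ℝ × ℝ => f p.1 p.2) (S, t) (1, 0)

lemma hasDerivAt_pdt {f : ℝ → ℝ → Fin 3 → ℝ} (hf : ContDiff ℝ 1 (fun p : ℝ × ℝ => f p.1 p.2))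
    (S t : ℝ) : HasDerivAt (fun t' => f S t') (pdt f S t) t := by
  have h := (hf.differentiable one_ne_zero (S, t)).hasFDerivAt
  have hline : HasDerivAt (fun t' : ℝ => ((S : ℝ), t')) ((0 : ℝ), (1 : ℝ)) t :=
    (hasDerivAt_const t S).prodMk (hasDerivAt_id t)
  exact h.comp_hasDerivAt t hline

lemma hasDerivAt_pds {f : ℝ → ℝ → Fin 3 → ℝ} (hf : ContDiff ℝ 1 (fun p : ℝ × ℝ => f p.1 p.2))
    (S t : ℝ) : HasDerivAt (fun S' => f S' t) (pds f S t) S := by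
  have h := (hf.differentiable one_ne_zero (S, t)).hasFDerivAt
  have hline : HasDerivAt (fun S' : ℝ => (S', t)) ((1 : ℝ), (0 : ℝ)) S :=
    (hasDerivAt_id S).prodMk (hasDerivAt_const S t)
  exact h.comp_hasDerivAt S hline

lemma continuous_pdt {f : ℝ → ℝ → Fin 3 → ℝ} (hf : ContDiff ℝ 1 (fun p : ℝ × ℝ => f p.1 p.2)) :
    Continuous (fun p : ℝ × ℝ => pdt f p.1 p.2) := by
  have h1 : Continuous (fun p : ℝ × ℝ => fderiv ℝ (fun p : ℝ × ℝ => f p.1 p.2) p) :=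
    hf.continuous_fderiv one_ne_zero
  exact (ContinuousLinearMap.apply ℝ (Fin 3 → ℝ) ((0:ℝ), (1:ℝ))).continuous.comp h1

lemma continuous_pds {f : ℝ → ℝ → Fin 3 → ℝ} (hf : ContDiff ℝ 1 (fun p : ℝ × ℝ => f p.1 p.2)) :
    Continuous (fun p : ℝ × ℝ => pds f p.1 p.2) := by
  have h1 : Continuous (fun p : ℝ × ℝ => fderiv ℝ (fun p : ℝ × ℝ => f p.1 p.2) p) :=
    hf.continuous_fderiv one_ne_zero
  exact (ContinuousLinearMap.apply ℝ (Fin 3 → ℝ) ((1:ℝ), (0:ℝ))).continuous.comp h1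

lemma hasDerivAt_mulVec (M : Matrix (Fin 3) (Fin 3) ℝ) {f : ℝ → Fin 3 → ℝ} {f' : Fin 3 → ℝ} {x : ℝ}
    (hf : HasDerivAt f f' x) : HasDerivAt (fun y => M.mulVec (f y)) (M.mulVec f') x := by
  have h := (LinearMap.toContinuousLinearMap M.mulVecLin).hasFDerivAt (x := f x)
  exact h.comp_hasDerivAt x hf

lemma hasDerivAt_dot {f g : ℝ → Fin 3 → ℝ} {f' g' : Fin 3 → ℝ} {x : ℝ}
    (hf : HasDerivAt f f' x) (hg : HasDerivAt g g' x) :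
    HasDerivAt (fun y => f y ⬝ᵥ g y) (f' ⬝ᵥ g x + f x ⬝ᵥ g') x := by
  have hc : ∀ (h : ℝ → Fin 3 → ℝ) (h' : Fin 3 → ℝ), HasDerivAt h h' x →
      ∀ i, HasDerivAt (fun y => h y i) (h' i) x := fun h h' hh i =>
    ((ContinuousLinearMap.proj (R := ℝ) (φ := fun _ : Fin 3 => ℝ) i).hasFDerivAt).comp_hasDerivAt x hh
  have : HasDerivAt (fun y => ∑ i : Fin 3, f y i * g y i)
      (∑ i : Fin 3, (f' i * g x i + f x i * g' i)) x :=
    HasDerivAt.fun_sum fun i _ => (hc f f' hf i).mul (hc g g' hg i)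
  simpa [dotProduct, Finset.sum_add_distrib] using this

lemma continuous_dot {f g : ℝ × ℝ → Fin 3 → ℝ} (hf : Continuous f) (hg : Continuous g) :
    Continuous (fun p => f p ⬝ᵥ g p) := by
  simp only [dotProduct]
  exact continuous_finset_sum _ fun i _ =>
    ((continuous_apply i).comp hf).mul ((continuous_apply i).comp hg)

lemma continuous_mulVec (M : Matrix (Fin 3) (Fin 3) ℝ) {f : ℝ × ℝ → Fin 3 → ℝ}
    (hf : Continuous f) : Continuous (fun p => M.mulVec (f p)) :=
  (LinearMap.toContinuousLinearMap M.mulVecLin).continuous.comp hf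

lemma key (ρA : ℝ) (G H J : Matrix (Fin 3) (Fin 3) ℝ)
    (hG : Gᵀ = G) (hH : Hᵀ = H) (hJ : Jᵀ = J)
    (v ω ε κ vS ωS vT ωT εT κT gS hS : Fin 3 → ℝ)
    (e1 : gS + κ ⨯₃ G.mulVec ε - ω ⨯₃ (ρA • v) = ρA • vT)
    (e2 : hS + κ ⨯₃ H.mulVec κ + (ε + ![0,0,1]) ⨯₃ G.mulVec ε - ω ⨯₃ J.mulVec ω = J.mulVec ωT)
    (e3 : vS + κ ⨯₃ v + (ε + ![0,0,1]) ⨯₃ ω = εT)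
    (e4 : ωS + κ ⨯₃ ω = κT) :
    (1/2) * (ρA * (vT ⬝ᵥ v + v ⬝ᵥ vT) + (ωT ⬝ᵥ J.mulVec ω + ω ⬝ᵥ J.mulVec ωT)
      + (εT ⬝ᵥ G.mulVec ε + ε ⬝ᵥ G.mulVec εT) + (κT ⬝ᵥ H.mulVec κ + κ ⬝ᵥ H.mulVec κT))
    = (vS ⬝ᵥ G.mulVec ε + v ⬝ᵥ gS) + (ωS ⬝ᵥ H.mulVec κ + ω ⬝ᵥ hS) := by
  have g01 : G 1 0 = G 0 1 := by
    have := congrFun (congrFun hG 1) 0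
    rw [Matrix.transpose_apply] at this
    exact this.symm
  have g02 : G 2 0 = G 0 2 := by
    have := congrFun (congrFun hG 2) 0
    rw [Matrix.transpose_apply] at this
    exact this.symm
  have g12 : G 2 1 = G 1 2 := by
    have := congrFun (congrFun hG 2) 1
    rw [Matrix.transpose_apply] at this
    exact this.symm
  have h01 : H 1 0 = H 0 1 := by
    have := congrFun (congrFun hH 1) 0
    rw [Matrix.transpose_apply] at this
    exact this.symm
  have h02 : H 2 0 = H 0 2 := by
    have := congrFun (congrFun hH 2) 0
    rw [Matrix.transpose_apply] at this
    exact this.symm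
  have h12 : H 2 1 = H 1 2 := by
    have := congrFun (congrFun hH 2) 1
    rw [Matrix.transpose_apply] at this
    exact this.symm
  have j01 : J 1 0 = J 0 1 := by
    have := congrFun (congrFun hJ 1) 0
    rw [Matrix.transpose_apply] at this
    exact this.symm
  have j02 : J 2 0 = J 0 2 := by
    have := congrFun (congrFun hJ 2) 0
    rw [Matrix.transpose_apply] at this
    exact this.symm
  have j12 : J 2 1 = J 1 2 := by
    have := congrFun (congrFun hJ 2) 1
    rw [Matrix.transpose_apply] at this
    exact this.symm
  have E1 := fun i => congrFun e1 i
  have E2 := fun i => congrFun e2 i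
  have E3 := fun i => congrFun e3 i
  have E4 := fun i => congrFun e4 i
  simp only [cross_apply, Matrix.mulVec, dotProduct, Fin.sum_univ_three, Pi.add_apply,
    Pi.sub_apply, Pi.smul_apply, smul_eq_mul, Matrix.cons_val', Matrix.cons_val_zero,
    Matrix.cons_val_one, Matrix.head_cons, Matrix.cons_val_two, Matrix.tail_cons,
    Matrix.empty_val', Matrix.cons_val_fin_one, Matrix.head_fin_const] at E1 E2 E3 E4 ⊢
  have E10 := E1 0; have E11 := E1 1; have E12 := E1 2
  have E20 := E2 0; have E21 := E2 1; have E22 := E2 2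
  have E30 := E3 0; have E31 := E3 1; have E32 := E3 2
  have E40 := E4 0; have E41 := E4 1; have E42 := E4 2
  simp only [Matrix.cons_val_zero, Matrix.cons_val_one, Matrix.head_cons,
    Matrix.cons_val_two, Matrix.tail_cons] at E10 E11 E12 E20 E21 E22 E30 E31 E32 E40 E41 E42
  simp only [g01, g02, g12, h01, h02, h12, j01, j02, j12]
    at E10 E11 E12 E20 E21 E22 E30 E31 E32 E40 E41 E42 ⊢
  linear_combination (-(v 0)) * E10 - (v 1) * E11 - (v 2) * E12
    - (ω 0) * E20 - (ω 1) * E21 - (ω 2) * E22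
    - (G 0 0 * ε 0 + G 0 1 * ε 1 + G 0 2 * ε 2) * E30
    - (G 0 1 * ε 0 + G 1 1 * ε 1 + G 1 2 * ε 2) * E31
    - (G 0 2 * ε 0 + G 1 2 * ε 1 + G 2 2 * ε 2) * E32
    - (H 0 0 * κ 0 + H 0 1 * κ 1 + H 0 2 * κ 2) * E40
    - (H 0 1 * κ 0 + H 1 1 * κ 1 + H 1 2 * κ 2) * E41
    - (H 0 2 * κ 0 + H 1 2 * κ 1 + H 2 2 * κ 2) * E42


/-- Conservation of energy for the Timoshenko beam: if the fields `v, ω, ε, κ`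
(components in the moving frame of velocity, spin, strain and curvature) satisfy the
dynamical equations together with the closure relations, then the time derivative of
the total energy equals the boundary flux term. -/
theorem stmt10 (L ρA : ℝ) (hρA : 0 < ρA)
    (G H J : Matrix (Fin 3) (Fin 3) ℝ)
    (hG : Gᵀ = G) (hH : Hᵀ = H) (hJ : Jᵀ = J)
    (v ω ε κ : ℝ → ℝ → Fin 3 → ℝ)
    (hv : ContDiff ℝ 1 (fun p : ℝ × ℝ => v p.1 p.2))
    (hω : ContDiff ℝ 1 (fun p : ℝ × ℝ => ω p.1 p.2))
    (hε : ContDiff ℝ 1 (fun p : ℝ × ℝ => ε p.1 p.2))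
    (hκ : ContDiff ℝ 1 (fun p : ℝ × ℝ => κ p.1 p.2))
    -- (i) balance of linear momentum
    (heq1 : ∀ S t, deriv (fun S' => G.mulVec (ε S' t)) S + κ S t ⨯₃ G.mulVec (ε S t)
      - ω S t ⨯₃ (ρA • v S t) = ρA • deriv (fun t' => v S t') t)
    -- (ii) balance of angular momentum
    (heq2 : ∀ S t, deriv (fun S' => H.mulVec (κ S' t)) S + κ S t ⨯₃ H.mulVec (κ S t)
      + (ε S t + ![0, 0, 1]) ⨯₃ G.mulVec (ε S t) - ω S t ⨯₃ J.mulVec (ω S t)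
      = J.mulVec (deriv (fun t' => ω S t') t))
    -- (iii) closure relation for the strain
    (heq3 : ∀ S t, deriv (fun S' => v S' t) S + κ S t ⨯₃ v S t
      + (ε S t + ![0, 0, 1]) ⨯₃ ω S t = deriv (fun t' => ε S t') t)
    -- (iv) closure relation for the curvature
    (heq4 : ∀ S t, deriv (fun S' => ω S' t) S + κ S t ⨯₃ ω S t
      = deriv (fun t' => κ S t') t)
    (t : ℝ) :
    HasDerivAt
      (fun τ => ∫ S in (0:ℝ)..L,
        (1 / 2) * (ρA * (v S τ ⬝ᵥ v S τ) + ω S τ ⬝ᵥ J.mulVec (ω S τ)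
          + ε S τ ⬝ᵥ G.mulVec (ε S τ) + κ S τ ⬝ᵥ H.mulVec (κ S τ)))
      ((v L t ⬝ᵥ G.mulVec (ε L t) + ω L t ⬝ᵥ H.mulVec (κ L t))
        - (v 0 t ⬝ᵥ G.mulVec (ε 0 t) + ω 0 t ⬝ᵥ H.mulVec (κ 0 t))) t := by
    -- the time derivative of the energy density
  set eT : ℝ → ℝ → ℝ := fun S τ =>
    (1/2) * (ρA * (pdt v S τ ⬝ᵥ v S τ + v S τ ⬝ᵥ pdt v S τ)
      + (pdt ω S τ ⬝ᵥ J.mulVec (ω S τ) + ω S τ ⬝ᵥ J.mulVec (pdt ω S τ))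
      + (pdt ε S τ ⬝ᵥ G.mulVec (ε S τ) + ε S τ ⬝ᵥ G.mulVec (pdt ε S τ))
      + (pdt κ S τ ⬝ᵥ H.mulVec (κ S τ) + κ S τ ⬝ᵥ H.mulVec (pdt κ S τ))) with heT
  -- the energy density has this time derivative
  have hderiv : ∀ S τ : ℝ, HasDerivAt (fun τ' =>
      (1 / 2) * (ρA * (v S τ' ⬝ᵥ v S τ') + ω S τ' ⬝ᵥ J.mulVec (ω S τ')
        + ε S τ' ⬝ᵥ G.mulVec (ε S τ') + κ S τ' ⬝ᵥ H.mulVec (κ S τ'))) (eT S τ) τ := by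
    intro S τ
    have hv' := hasDerivAt_pdt hv S τ
    have hω' := hasDerivAt_pdt hω S τ
    have hε' := hasDerivAt_pdt hε S τ
    have hκ' := hasDerivAt_pdt hκ S τ
    exact (((((hasDerivAt_dot hv' hv').const_mul ρA).add
      (hasDerivAt_dot hω' (hasDerivAt_mulVec J hω'))).add
      (hasDerivAt_dot hε' (hasDerivAt_mulVec G hε'))).add
      (hasDerivAt_dot hκ' (hasDerivAt_mulVec H hκ'))).const_mul (1/2)
  -- joint continuity of the integrand and of eT
  have cv := hv.continuous; have cω := hω.continuous
  have cε := hε.continuous; have cκ := hκ.continuous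
  have cvT := continuous_pdt hv; have cωT := continuous_pdt hω
  have cεT := continuous_pdt hε; have cκT := continuous_pdt hκ
  have hFc : Continuous (fun p : ℝ × ℝ =>
      (1 / 2) * (ρA * (v p.1 p.2 ⬝ᵥ v p.1 p.2) + ω p.1 p.2 ⬝ᵥ J.mulVec (ω p.1 p.2)
        + ε p.1 p.2 ⬝ᵥ G.mulVec (ε p.1 p.2) + κ p.1 p.2 ⬝ᵥ H.mulVec (κ p.1 p.2))) :=
    continuous_const.mul ((((continuous_const.mul (continuous_dot cv cv)).add
      (continuous_dot cω (continuous_mulVec J cω))).add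
      (continuous_dot cε (continuous_mulVec G cε))).add
      (continuous_dot cκ (continuous_mulVec H cκ)))
  have heTc : Continuous (fun p : ℝ × ℝ => eT p.1 p.2) := by
    rw [heT]
    exact continuous_const.mul ((((continuous_const.mul ((continuous_dot cvT cv).add
      (continuous_dot cv cvT))).add
      ((continuous_dot cωT (continuous_mulVec J cω)).add
        (continuous_dot cω (continuous_mulVec J cωT)))).add
      ((continuous_dot cεT (continuous_mulVec G cε)).add
        (continuous_dot cε (continuous_mulVec G cεT)))).add
      ((continuous_dot cκT (continuous_mulVec H cκ)).add
        (continuous_dot cκ (continuous_mulVec H cκT))))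
  -- bound on eT near t
  obtain ⟨C, hC⟩ := ((isCompact_uIcc (a := (0:ℝ)) (b := L)).prod
    (isCompact_closedBall t 1)).exists_bound_of_continuousOn heTc.continuousOn
  -- differentiation under the integral sign
  have main := intervalIntegral.hasDerivAt_integral_of_dominated_loc_of_deriv_le
    (μ := MeasureTheory.volume) (a := (0:ℝ)) (b := L) (x₀ := t)
    (F := fun τ S => (1 / 2) * (ρA * (v S τ ⬝ᵥ v S τ) + ω S τ ⬝ᵥ J.mulVec (ω S τ)
      + ε S τ ⬝ᵥ G.mulVec (ε S τ) + κ S τ ⬝ᵥ H.mulVec (κ S τ)))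
    (F' := fun τ S => eT S τ) (bound := fun _ => C) (Metric.ball_mem_nhds t zero_lt_one)
    (Filter.Eventually.of_forall fun τ =>
      ((hFc.comp (continuous_id.prodMk continuous_const)).aestronglyMeasurable))
    ((hFc.comp (continuous_id.prodMk continuous_const)).intervalIntegrable 0 L)
    ((heTc.comp (continuous_id.prodMk continuous_const)).aestronglyMeasurable)
    (MeasureTheory.ae_of_all _ fun S hS τ hτ =>
      hC (S, τ) ⟨Set.uIoc_subset_uIcc hS, Metric.ball_subset_closedBall hτ⟩)
    intervalIntegrable_const
    (MeasureTheory.ae_of_all _ fun S _ τ _ => hderiv S τ)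
  -- identify the derivative with the boundary flux
  have hval : (∫ S in (0:ℝ)..L, eT S t) =
      (v L t ⬝ᵥ G.mulVec (ε L t) + ω L t ⬝ᵥ H.mulVec (κ L t))
        - (v 0 t ⬝ᵥ G.mulVec (ε 0 t) + ω 0 t ⬝ᵥ H.mulVec (κ 0 t)) := by
    have hflux : ∀ S : ℝ, HasDerivAt
        (fun S' => v S' t ⬝ᵥ G.mulVec (ε S' t) + ω S' t ⬝ᵥ H.mulVec (κ S' t))
        ((pds v S t ⬝ᵥ G.mulVec (ε S t) + v S t ⬝ᵥ G.mulVec (pds ε S t))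
          + (pds ω S t ⬝ᵥ H.mulVec (κ S t) + ω S t ⬝ᵥ H.mulVec (pds κ S t))) S := fun S =>
      (hasDerivAt_dot (hasDerivAt_pds hv S t) (hasDerivAt_mulVec G (hasDerivAt_pds hε S t))).add
        (hasDerivAt_dot (hasDerivAt_pds hω S t) (hasDerivAt_mulVec H (hasDerivAt_pds hκ S t)))
    have hpt : ∀ S : ℝ, eT S t =
        (pds v S t ⬝ᵥ G.mulVec (ε S t) + v S t ⬝ᵥ G.mulVec (pds ε S t))
          + (pds ω S t ⬝ᵥ H.mulVec (κ S t) + ω S t ⬝ᵥ H.mulVec (pds κ S t)) := by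
      intro S
      have d1 : deriv (fun S' => G.mulVec (ε S' t)) S = G.mulVec (pds ε S t) :=
        (hasDerivAt_mulVec G (hasDerivAt_pds hε S t)).deriv
      have d2 : deriv (fun S' => H.mulVec (κ S' t)) S = H.mulVec (pds κ S t) :=
        (hasDerivAt_mulVec H (hasDerivAt_pds hκ S t)).deriv
      have d3 : deriv (fun S' => v S' t) S = pds v S t := (hasDerivAt_pds hv S t).deriv
      have d4 : deriv (fun S' => ω S' t) S = pds ω S t := (hasDerivAt_pds hω S t).deriv
      have d5 : deriv (fun t' => v S t') t = pdt v S t := (hasDerivAt_pdt hv S t).deriv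
      have d6 : deriv (fun t' => ω S t') t = pdt ω S t := (hasDerivAt_pdt hω S t).deriv
      have d7 : deriv (fun t' => ε S t') t = pdt ε S t := (hasDerivAt_pdt hε S t).deriv
      have d8 : deriv (fun t' => κ S t') t = pdt κ S t := (hasDerivAt_pdt hκ S t).deriv
      have e1' := heq1 S t; rw [d1, d5] at e1'
      have e2' := heq2 S t; rw [d2, d6] at e2'
      have e3' := heq3 S t; rw [d3, d7] at e3'
      have e4' := heq4 S t; rw [d4, d8] at e4'
      exact key ρA G H J hG hH hJ (v S t) (ω S t) (ε S t) (κ S t) (pds v S t) (pds ω S t)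
        (pdt v S t) (pdt ω S t) (pdt ε S t) (pdt κ S t)
        (G.mulVec (pds ε S t)) (H.mulVec (pds κ S t)) e1' e2' e3' e4'
    have cvS := continuous_pds hv; have cωS := continuous_pds hω
    have cεS := continuous_pds hε; have cκS := continuous_pds hκ
    have hfsc : Continuous (fun p : ℝ × ℝ =>
        (pds v p.1 p.2 ⬝ᵥ G.mulVec (ε p.1 p.2) + v p.1 p.2 ⬝ᵥ G.mulVec (pds ε p.1 p.2))
          + (pds ω p.1 p.2 ⬝ᵥ H.mulVec (κ p.1 p.2)
            + ω p.1 p.2 ⬝ᵥ H.mulVec (pds κ p.1 p.2))) :=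
      ((continuous_dot cvS (continuous_mulVec G cε)).add
        (continuous_dot cv (continuous_mulVec G cεS))).add
        ((continuous_dot cωS (continuous_mulVec H cκ)).add
          (continuous_dot cω (continuous_mulVec H cκS)))
    have hint : IntervalIntegrable (fun S =>
        (pds v S t ⬝ᵥ G.mulVec (ε S t) + v S t ⬝ᵥ G.mulVec (pds ε S t))
          + (pds ω S t ⬝ᵥ H.mulVec (κ S t) + ω S t ⬝ᵥ H.mulVec (pds κ S t)))
        MeasureTheory.volume 0 L :=
      (hfsc.comp (continuous_id.prodMk continuous_const)).intervalIntegrable 0 L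
    rw [intervalIntegral.integral_congr (fun S _ => hpt S)]
    exact intervalIntegral.integral_eq_sub_of_hasDerivAt (fun S _ => hflux S) hint
  rw [← hval]
  exact main.2
end
end

section
/- Stationarity of the Timoshenko action at equilibrium: let ρA > 0, let G, H, J be symmetric real 3×3 matrices, and let φ : [0,L] × [t₁,t₂] × (−1,1) → ℝ³ and R : [0,L] × [t₁,t₂] × (−1,1) → SO(3) be smooth families (variable names S, t, s). Suppose (a) at s = 0 the fields satisfy the equilibrium equations ∂/∂S (R·G·(R⁻¹·∂φ/∂S − e₃)) = ρA·∂²φ/∂t² and ∂/∂S (R·H·j(R⁻¹·∂R/∂S)) + (∂φ/∂S) × (R·G·(R⁻¹·∂φ/∂S − e₃)) = ∂/∂t (R·J·j(R⁻¹·∂R/∂t)); (b) φ and R are independent of s at t = t₁ and t = t₂; (c) at S = 0 and S = L and all t, ⟨∂φ/∂s, R·G·(R⁻¹·∂φ/∂S − e₃)⟩ = 0 and ⟨j(R⁻¹·∂R/∂s), H·j(R⁻¹·∂R/∂S)⟩ = 0. Define the action S(s) = ∫_{t₁}^{t₂} ∫₀ᴸ (1/2)(ρA·⟨∂φ/∂t,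 ∂φ/∂t⟩ + ⟨j(R⁻¹·∂R/∂t), J·j(R⁻¹·∂R/∂t)⟩ − ⟨R⁻¹·∂φ/∂S − e₃, G·(R⁻¹·∂φ/∂S − e₃)⟩ − ⟨j(R⁻¹·∂R/∂S), H·j(R⁻¹·∂R/∂S)⟩) dS dt. Then dS/ds = 0 at s = 0. -/
open Matrix intervalIntegral MeasureTheory

noncomputable section

attribute [local instance] Matrix.normedAddCommGroup Matrix.normedSpace

set_option maxHeartbeats 1000000

/-- The map `j` sending a 3×3 matrix to the vector of its skew components. -/
def jmap (A : Matrix (Fin 3) (Fin 3) ℝ) : Fin 3 → ℝ := ![A 2 1, A 0 2, A 1 0]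

namespace Stmt11

def d1 : ℝ × ℝ × ℝ := (1, 0, 0)
def d2 : ℝ × ℝ × ℝ := (0, 1, 0)
def d3 : ℝ × ℝ × ℝ := (0, 0, 1)


/-! ### Pure matrix algebra -/

theorem jmap_apply (A : Matrix (Fin 3) (Fin 3) ℝ) :
    jmap A 0 = A 2 1 ∧ jmap A 1 = A 0 2 ∧ jmap A 2 = A 1 0 := by
  refine ⟨rfl, rfl, rfl⟩

theorem jmap_sub (A B : Matrix (Fin 3) (Fin 3) ℝ) : jmap (A - B) = jmap A - jmap B := by
  funext i; fin_cases i <;> simp [jmap]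

theorem jmap_zero : jmap 0 = 0 := by
  funext i; fin_cases i <;> simp [jmap]

theorem skew_mulVec {A : Matrix (Fin 3) (Fin 3) ℝ} (hA : Aᵀ = -A) (v : Fin 3 → ℝ) :
    A *ᵥ v = jmap A ⨯₃ v := by
  have h : ∀ i j, A j i = -A i j := fun i j => congrFun (congrFun hA i) j
  have h00 : A 0 0 = 0 := by have := h 0 0; linarith
  have h11 : A 1 1 = 0 := by have := h 1 1; linarith
  have h22 : A 2 2 = 0 := by have := h 2 2; linarith
  have h01 : A 0 1 = -A 1 0 := by have := h 1 0; linarith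
  have h02 : A 0 2 = -A 2 0 := by have := h 2 0; linarith
  have h12 : A 1 2 = -A 2 1 := by have := h 2 1; linarith
  funext i; fin_cases i <;>
    simp [Matrix.mulVec, dotProduct, Fin.sum_univ_three, jmap, cross_apply, h00, h11, h22,
      h01, h02, h12] <;> ring

theorem jmap_commutator {P Q : Matrix (Fin 3) (Fin 3) ℝ} (hP : Pᵀ = -P) (hQ : Qᵀ = -Q) :
    jmap (P * Q - Q * P) = jmap P ⨯₃ jmap Q := by
  have hp : ∀ i j, P j i = -P i j := fun i j => congrFun (congrFun hP i) j
  have hq : ∀ i j, Q j i = -Q i j := fun i j => congrFun (congrFun hQ i) j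
  have p00 : P 0 0 = 0 := by have := hp 0 0; linarith
  have p11 : P 1 1 = 0 := by have := hp 1 1; linarith
  have p22 : P 2 2 = 0 := by have := hp 2 2; linarith
  have p01 : P 0 1 = -P 1 0 := by have := hp 1 0; linarith
  have p02 : P 0 2 = -P 2 0 := by have := hp 2 0; linarith
  have p12 : P 1 2 = -P 2 1 := by have := hp 2 1; linarith
  have q00 : Q 0 0 = 0 := by have := hq 0 0; linarith
  have q11 : Q 1 1 = 0 := by have := hq 1 1; linarith
  have q22 : Q 2 2 = 0 := by have := hq 2 2; linarith
  have q01 : Q 0 1 = -Q 1 0 := by have := hq 1 0; linarith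
  have q02 : Q 0 2 = -Q 2 0 := by have := hq 2 0; linarith
  have q12 : Q 1 2 = -Q 2 1 := by have := hq 2 1; linarith
  funext i; fin_cases i <;>
    simp [jmap, Matrix.sub_apply, Matrix.mul_apply, Fin.sum_univ_three, cross_apply,
      p00, p11, p22, p01, p02, p12, q00, q11, q22, q01, q02, q12] <;> ring

theorem cross_mulVec_adj (M : Matrix (Fin 3) (Fin 3) ℝ) (a b : Fin 3 → ℝ) :
    (M *ᵥ a) ⨯₃ (M *ᵥ b) = (M.adjugate)ᵀ *ᵥ (a ⨯₃ b) := by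
  rw [Matrix.adjugate_fin_three]
  funext i; fin_cases i <;>
    simp [cross_apply, Matrix.mulVec, dotProduct, Fin.sum_univ_three, Matrix.transpose_apply] <;>
    ring

theorem SO3.mul_transpose {R : Matrix (Fin 3) (Fin 3) ℝ} (hR : Rᵀ * R = 1) : R * Rᵀ = 1 :=
  mul_eq_one_comm.mp hR

theorem SO3.adjugate_eq {R : Matrix (Fin 3) (Fin 3) ℝ} (hR : Rᵀ * R = 1) (hdet : R.det = 1) :
    R.adjugate = Rᵀ := by
  have hinv : R⁻¹ = Rᵀ := Matrix.inv_eq_left_inv hR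
  have h2 : R * R.adjugate = 1 := by rw [Matrix.mul_adjugate, hdet, one_smul]
  have h3 : R⁻¹ = R.adjugate := Matrix.inv_eq_right_inv h2
  rw [← h3, hinv]

theorem SO3.cross {R : Matrix (Fin 3) (Fin 3) ℝ} (hR : Rᵀ * R = 1) (hdet : R.det = 1)
    (a b : Fin 3 → ℝ) : (R *ᵥ a) ⨯₃ (R *ᵥ b) = R *ᵥ (a ⨯₃ b) := by
  rw [cross_mulVec_adj, SO3.adjugate_eq hR hdet, Matrix.transpose_transpose]

theorem dot_transpose_mulVec (R : Matrix (Fin 3) (Fin 3) ℝ) (u v : Fin 3 → ℝ) :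
    (Rᵀ *ᵥ u) ⬝ᵥ v = u ⬝ᵥ (R *ᵥ v) := by
  simp only [Matrix.mulVec, dotProduct, Fin.sum_univ_three, Matrix.transpose_apply]
  ring

theorem SO3.dot {R : Matrix (Fin 3) (Fin 3) ℝ} (hR : Rᵀ * R = 1) (a b : Fin 3 → ℝ) :
    (R *ᵥ a) ⬝ᵥ (R *ᵥ b) = a ⬝ᵥ b := by
  rw [← dot_transpose_mulVec, Matrix.mulVec_mulVec, hR, Matrix.one_mulVec]

theorem dot_symm_of_symm {M : Matrix (Fin 3) (Fin 3) ℝ} (hM : Mᵀ = M) (u v : Fin 3 → ℝ) :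
    u ⬝ᵥ (M *ᵥ v) = v ⬝ᵥ (M *ᵥ u) := by
  have h01 : M 1 0 = M 0 1 := congrFun (congrFun hM 0) 1
  have h02 : M 2 0 = M 0 2 := congrFun (congrFun hM 0) 2
  have h12 : M 2 1 = M 1 2 := congrFun (congrFun hM 1) 2
  simp only [Matrix.mulVec, dotProduct, Fin.sum_univ_three, h01, h02, h12]
  ring



variable {E : Type*} [NormedAddCommGroup E] [NormedSpace ℝ E]

/-- Uncurry a function of three real variables. -/
def uc (f : ℝ → ℝ → ℝ → E) : ℝ × ℝ × ℝ → E := fun p => f p.1 p.2.1 p.2.2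

/-- Directional (partial) derivative of a curried function of three real variables. -/
def pd (v : ℝ × ℝ × ℝ) (f : ℝ → ℝ → ℝ → E) : ℝ → ℝ → ℝ → E :=
  fun S t s => fderiv ℝ (uc f) (S, t, s) v

theorem hasDerivAt_pd1 {f : ℝ → ℝ → ℝ → E} (hf : ContDiff ℝ (⊤ : ℕ∞) (uc f)) (S t s : ℝ) :
    HasDerivAt (fun S' => f S' t s) (pd d1 f S t s) S := by
  have h1 : HasDerivAt (fun S' : ℝ => (S', (t, s))) ((1 : ℝ), ((0 : ℝ), (0 : ℝ))) S :=
    (hasDerivAt_id S).prodMk (hasDerivAt_const S (t, s))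
  exact ((hf.differentiable (by simp) (S, t, s)).hasFDerivAt).comp_hasDerivAt S h1

theorem hasDerivAt_pd2 {f : ℝ → ℝ → ℝ → E} (hf : ContDiff ℝ (⊤ : ℕ∞) (uc f)) (S t s : ℝ) :
    HasDerivAt (fun t' => f S t' s) (pd d2 f S t s) t := by
  have h1 : HasDerivAt (fun t' : ℝ => (S, (t', s))) ((0 : ℝ), ((1 : ℝ), (0 : ℝ))) t :=
    (hasDerivAt_const t S).prodMk ((hasDerivAt_id t).prodMk (hasDerivAt_const t s))
  exact ((hf.differentiable (by simp) (S, t, s)).hasFDerivAt).comp_hasDerivAt t h1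

theorem hasDerivAt_pd3 {f : ℝ → ℝ → ℝ → E} (hf : ContDiff ℝ (⊤ : ℕ∞) (uc f)) (S t s : ℝ) :
    HasDerivAt (fun s' => f S t s') (pd d3 f S t s) s := by
  have h1 : HasDerivAt (fun s' : ℝ => (S, (t, s'))) ((0 : ℝ), ((0 : ℝ), (1 : ℝ))) s :=
    (hasDerivAt_const s S).prodMk ((hasDerivAt_const s t).prodMk (hasDerivAt_id s))
  exact ((hf.differentiable (by simp) (S, t, s)).hasFDerivAt).comp_hasDerivAt s h1

theorem contDiff_uc_pd {f : ℝ → ℝ → ℝ → E} (hf : ContDiff ℝ (⊤ : ℕ∞) (uc f)) (v : ℝ × ℝ × ℝ) :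
    ContDiff ℝ (⊤ : ℕ∞) (uc (pd v f)) := by
  have h : uc (pd v f) = fun p => fderiv ℝ (uc f) p v := rfl
  rw [h]
  exact (hf.fderiv_right (by simp)).clm_apply contDiff_const

theorem pd_comm {f : ℝ → ℝ → ℝ → E} (hf : ContDiff ℝ (⊤ : ℕ∞) (uc f)) (v w : ℝ × ℝ × ℝ)
    (S t s : ℝ) : pd v (pd w f) S t s = pd w (pd v f) S t s := by
  have hd : Differentiable ℝ (uc f) := hf.differentiable (by simp)
  have hfd : ContDiff ℝ (⊤ : ℕ∞) (fderiv ℝ (uc f)) := hf.fderiv_right (by simp)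
  have hsnd : HasFDerivAt (fderiv ℝ (uc f)) (fderiv ℝ (fderiv ℝ (uc f)) (S, t, s)) (S, t, s) :=
    (hfd.differentiable (by simp) (S, t, s)).hasFDerivAt
  have hsym := second_derivative_symmetric (fun y => (hd y).hasFDerivAt) hsnd
  have key : ∀ u : ℝ × ℝ × ℝ, ∀ z : ℝ × ℝ × ℝ,
      fderiv ℝ (fun p => fderiv ℝ (uc f) p u) (S, t, s) z
        = fderiv ℝ (fderiv ℝ (uc f)) (S, t, s) z u := by
    intro u z
    rw [fderiv_clm_apply (hfd.differentiable (by simp) (S, t, s)) (differentiableAt_const u)]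
    simp
  have h1 : pd v (pd w f) S t s = fderiv ℝ (fun p => fderiv ℝ (uc f) p w) (S, t, s) v := rfl
  have h2 : pd w (pd v f) S t s = fderiv ℝ (fun p => fderiv ℝ (uc f) p v) (S, t, s) w := rfl
  rw [h1, h2, key w v, key v w, hsym v w]

/-! ### HasDerivAt combinators for vectors and matrices -/

theorem hasDerivAt_matrix {A : ℝ → Matrix (Fin 3) (Fin 3) ℝ} {A' : Matrix (Fin 3) (Fin 3) ℝ}
    {x : ℝ} : HasDerivAt A A' x ↔ ∀ i j, HasDerivAt (fun y => A y i j) (A' i j) x := by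
  exact (hasDerivAt_pi (φ := fun y => (A y : Fin 3 → Fin 3 → ℝ)) (φ' := A')).trans
    (forall_congr' fun i => hasDerivAt_pi)

theorem _root_.HasDerivAt.dotProd {u v : ℝ → Fin 3 → ℝ} {u' v' : Fin 3 → ℝ} {x : ℝ}
    (hu : HasDerivAt u u' x) (hv : HasDerivAt v v' x) :
    HasDerivAt (fun y => u y ⬝ᵥ v y) (u' ⬝ᵥ v x + u x ⬝ᵥ v') x := by
  have hu' := hasDerivAt_pi.mp hu
  have hv' := hasDerivAt_pi.mp hv
  simp only [dotProduct, Fin.sum_univ_three]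
  refine ((((((hu' 0).mul (hv' 0)).add ((hu' 1).mul (hv' 1))).add ((hu' 2).mul (hv' 2))).congr_deriv
    ?_).congr_of_eventuallyEq (Filter.Eventually.of_forall fun y => ?_))
  · ring
  · simp

theorem _root_.HasDerivAt.matMul {A B : ℝ → Matrix (Fin 3) (Fin 3) ℝ}
    {A' B' : Matrix (Fin 3) (Fin 3) ℝ} {x : ℝ}
    (hA : HasDerivAt A A' x) (hB : HasDerivAt B B' x) :
    HasDerivAt (fun y => A y * B y) (A' * B x + A x * B') x := by
  rw [hasDerivAt_matrix] at hA hB ⊢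
  intro i j
  have := (((hA i 0).mul (hB 0 j)).add ((hA i 1).mul (hB 1 j))).add ((hA i 2).mul (hB 2 j))
  refine (this.congr_deriv ?_).congr_of_eventuallyEq (Filter.Eventually.of_forall fun y => ?_)
  · simp [Matrix.mul_apply, Matrix.add_apply, Fin.sum_univ_three]; ring
  · simp [Matrix.mul_apply, Fin.sum_univ_three]

theorem _root_.HasDerivAt.mulVecc {A : ℝ → Matrix (Fin 3) (Fin 3) ℝ} {v : ℝ → Fin 3 → ℝ}
    {A' : Matrix (Fin 3) (Fin 3) ℝ} {v' : Fin 3 → ℝ} {x : ℝ}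
    (hA : HasDerivAt A A' x) (hv : HasDerivAt v v' x) :
    HasDerivAt (fun y => A y *ᵥ v y) (A' *ᵥ v x + A x *ᵥ v') x := by
  rw [hasDerivAt_matrix] at hA
  have hv' := hasDerivAt_pi.mp hv
  rw [hasDerivAt_pi]
  intro i
  have := (((hA i 0).mul (hv' 0)).add ((hA i 1).mul (hv' 1))).add ((hA i 2).mul (hv' 2))
  refine (this.congr_deriv ?_).congr_of_eventuallyEq (Filter.Eventually.of_forall fun y => ?_)
  · simp [Matrix.mulVec, dotProduct, Fin.sum_univ_three]; ring
  · simp [Matrix.mulVec, dotProduct, Fin.sum_univ_three]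

theorem _root_.HasDerivAt.constMulVec (M : Matrix (Fin 3) (Fin 3) ℝ) {v : ℝ → Fin 3 → ℝ}
    {v' : Fin 3 → ℝ} {x : ℝ} (hv : HasDerivAt v v' x) :
    HasDerivAt (fun y => M *ᵥ v y) (M *ᵥ v') x := by
  have := (hasDerivAt_const x M).mulVecc hv
  simpa using this

theorem _root_.HasDerivAt.transp {A : ℝ → Matrix (Fin 3) (Fin 3) ℝ}
    {A' : Matrix (Fin 3) (Fin 3) ℝ} {x : ℝ} (hA : HasDerivAt A A' x) :
    HasDerivAt (fun y => (A y)ᵀ) (A'ᵀ) x := by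
  rw [hasDerivAt_matrix] at hA ⊢
  intro i j
  exact hA j i

theorem _root_.HasDerivAt.jmapD {A : ℝ → Matrix (Fin 3) (Fin 3) ℝ}
    {A' : Matrix (Fin 3) (Fin 3) ℝ} {x : ℝ} (hA : HasDerivAt A A' x) :
    HasDerivAt (fun y => jmap (A y)) (jmap A') x := by
  rw [hasDerivAt_matrix] at hA
  rw [hasDerivAt_pi]
  intro i
  fin_cases i
  · exact hA 2 1
  · exact hA 0 2
  · exact hA 1 0

theorem _root_.HasDerivAt.subConst {v : ℝ → Fin 3 → ℝ} {v' : Fin 3 → ℝ} {x : ℝ}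
    (hv : HasDerivAt v v' x) (c : Fin 3 → ℝ) :
    HasDerivAt (fun y => v y - c) v' x := by
  exact hv.sub_const c

/-! ### ContDiff combinators -/

variable {X : Type*} [NormedAddCommGroup X] [NormedSpace ℝ X]

theorem contDiff_matrix {A : X → Matrix (Fin 3) (Fin 3) ℝ} {n : WithTop ℕ∞} :
    ContDiff ℝ n A ↔ ∀ i j, ContDiff ℝ n fun x => A x i j := by
  exact (contDiff_pi (Φ := fun x => (A x : Fin 3 → Fin 3 → ℝ))).trans
    (forall_congr' fun i => contDiff_pi)

theorem _root_.ContDiff.dotProd {u v : X → Fin 3 → ℝ} {n : WithTop ℕ∞}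
    (hu : ContDiff ℝ n u) (hv : ContDiff ℝ n v) :
    ContDiff ℝ n fun x => u x ⬝ᵥ v x := by
  have hu' := contDiff_pi.mp hu
  have hv' := contDiff_pi.mp hv
  have : (fun x => u x ⬝ᵥ v x)
      = fun x => u x 0 * v x 0 + u x 1 * v x 1 + u x 2 * v x 2 := by
    funext x; simp [dotProduct, Fin.sum_univ_three]
  rw [this]
  exact (((hu' 0).mul (hv' 0)).add ((hu' 1).mul (hv' 1))).add ((hu' 2).mul (hv' 2))

theorem _root_.ContDiff.matMulC {A B : X → Matrix (Fin 3) (Fin 3) ℝ} {n : WithTop ℕ∞}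
    (hA : ContDiff ℝ n A) (hB : ContDiff ℝ n B) :
    ContDiff ℝ n fun x => A x * B x := by
  rw [contDiff_matrix] at hA hB ⊢
  intro i j
  have : (fun x => (A x * B x) i j)
      = fun x => A x i 0 * B x 0 j + A x i 1 * B x 1 j + A x i 2 * B x 2 j := by
    funext x; simp [Matrix.mul_apply, Fin.sum_univ_three]
  rw [this]
  exact (((hA i 0).mul (hB 0 j)).add ((hA i 1).mul (hB 1 j))).add ((hA i 2).mul (hB 2 j))

theorem _root_.ContDiff.mulVecC {A : X → Matrix (Fin 3) (Fin 3) ℝ} {v : X → Fin 3 → ℝ}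
    {n : WithTop ℕ∞} (hA : ContDiff ℝ n A) (hv : ContDiff ℝ n v) :
    ContDiff ℝ n fun x => A x *ᵥ v x := by
  rw [contDiff_matrix] at hA
  have hv' := contDiff_pi.mp hv
  rw [contDiff_pi]
  intro i
  have : (fun x => (A x *ᵥ v x) i)
      = fun x => A x i 0 * v x 0 + A x i 1 * v x 1 + A x i 2 * v x 2 := by
    funext x; simp [Matrix.mulVec, dotProduct, Fin.sum_univ_three]
  rw [this]
  exact (((hA i 0).mul (hv' 0)).add ((hA i 1).mul (hv' 1))).add ((hA i 2).mul (hv' 2))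

theorem _root_.ContDiff.transpC {A : X → Matrix (Fin 3) (Fin 3) ℝ} {n : WithTop ℕ∞}
    (hA : ContDiff ℝ n A) : ContDiff ℝ n fun x => (A x)ᵀ := by
  rw [contDiff_matrix] at hA ⊢
  intro i j
  exact hA j i

theorem _root_.ContDiff.jmapC {A : X → Matrix (Fin 3) (Fin 3) ℝ} {n : WithTop ℕ∞}
    (hA : ContDiff ℝ n A) : ContDiff ℝ n fun x => jmap (A x) := by
  rw [contDiff_matrix] at hA
  rw [contDiff_pi]
  intro i
  fin_cases i
  · exact hA 2 1
  · exact hA 0 2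
  · exact hA 1 0

theorem _root_.ContDiff.crossC {u v : X → Fin 3 → ℝ} {n : WithTop ℕ∞}
    (hu : ContDiff ℝ n u) (hv : ContDiff ℝ n v) :
    ContDiff ℝ n fun x => u x ⨯₃ v x := by
  have hu' := contDiff_pi.mp hu
  have hv' := contDiff_pi.mp hv
  rw [contDiff_pi]
  intro i
  fin_cases i
  · show ContDiff ℝ n fun x => (u x ⨯₃ v x) 0
    have : (fun x => (u x ⨯₃ v x) 0) = fun x => u x 1 * v x 2 - u x 2 * v x 1 := by
      funext x; simp [cross_apply]
    rw [this]; exact ((hu' 1).mul (hv' 2)).sub ((hu' 2).mul (hv' 1))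
  · show ContDiff ℝ n fun x => (u x ⨯₃ v x) 1
    have : (fun x => (u x ⨯₃ v x) 1) = fun x => u x 2 * v x 0 - u x 0 * v x 2 := by
      funext x; simp [cross_apply]
    rw [this]; exact ((hu' 2).mul (hv' 0)).sub ((hu' 0).mul (hv' 2))
  · show ContDiff ℝ n fun x => (u x ⨯₃ v x) 2
    have : (fun x => (u x ⨯₃ v x) 2) = fun x => u x 0 * v x 1 - u x 1 * v x 0 := by
      funext x; simp [cross_apply]
    rw [this]; exact ((hu' 0).mul (hv' 1)).sub ((hu' 1).mul (hv' 0))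

theorem _root_.ContDiff.subConstC {v : X → Fin 3 → ℝ} {n : WithTop ℕ∞}
    (hv : ContDiff ℝ n v) (c : Fin 3 → ℝ) : ContDiff ℝ n fun x => v x - c :=
  hv.sub contDiff_const



/-- Differentiation under the interval integral sign, smooth-case. -/
theorem hasDerivAt_param_integral {f f' : ℝ → ℝ → ℝ} {a b : ℝ}
    (hf : Continuous fun p : ℝ × ℝ => f p.1 p.2)
    (hf' : Continuous fun p : ℝ × ℝ => f' p.1 p.2)
    (hd : ∀ x τ, HasDerivAt (fun y => f y τ) (f' x τ) x) (x₀ : ℝ) :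
    HasDerivAt (fun x => ∫ τ in a..b, f x τ) (∫ τ in a..b, f' x₀ τ) x₀ := by
  obtain ⟨M, hM⟩ :=
    ((isCompact_Icc (a := x₀ - 1) (b := x₀ + 1)).prod
      (isCompact_uIcc (a := a) (b := b))).exists_bound_of_continuousOn hf'.continuousOn
  refine (intervalIntegral.hasDerivAt_integral_of_dominated_loc_of_deriv_le
      (F := f) (F' := f') (bound := fun _ => M) (s := Metric.ball x₀ 1) (Metric.ball_mem_nhds x₀ one_pos) ?_ ?_ ?_ ?_ ?_ ?_).2
  · exact Filter.Eventually.of_forall fun x =>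
      (hf.comp (Continuous.prodMk_right x)).aestronglyMeasurable
  · exact (hf.comp (Continuous.prodMk_right x₀)).intervalIntegrable a b
  · exact (hf'.comp (Continuous.prodMk_right x₀)).aestronglyMeasurable
  · refine Filter.Eventually.of_forall fun τ hτ x hx => ?_
    have hx' : x ∈ Set.Icc (x₀ - 1) (x₀ + 1) := by
      rw [Metric.mem_ball, Real.dist_eq, abs_lt] at hx
      constructor <;> linarith [hx.1, hx.2]
    exact hM (x, τ) (Set.mk_mem_prod hx' (Set.uIoc_subset_uIcc hτ))
  · exact intervalIntegrable_const
  · exact Filter.Eventually.of_forall fun τ _ x _ => hd x τ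

/-- Continuity of a doubly-parametric interval integral. -/
theorem continuous_param_integral2 {g : ℝ → ℝ → ℝ → ℝ} {a b : ℝ}
    (hg : Continuous fun p : ℝ × ℝ × ℝ => g p.1 p.2.1 p.2.2) :
    Continuous fun p : ℝ × ℝ => ∫ x in a..b, g x p.1 p.2 := by
  have : Continuous (Function.uncurry fun (p : ℝ × ℝ) (x : ℝ) => g x p.1 p.2) := by
    have hc : Continuous fun q : (ℝ × ℝ) × ℝ => (q.2, q.1.1, q.1.2) := by fun_prop
    exact hg.comp hc
  exact continuous_parametric_intervalIntegral_of_continuous' this a b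


section Fields

variable (φ : ℝ → ℝ → ℝ → Fin 3 → ℝ) (R : ℝ → ℝ → ℝ → Matrix (Fin 3) (Fin 3) ℝ)
variable (G H J : Matrix (Fin 3) (Fin 3) ℝ) (ρA : ℝ)

def eps : ℝ → ℝ → ℝ → Fin 3 → ℝ :=
  fun S t s => (R S t s)ᵀ *ᵥ pd d1 φ S t s - ![0, 0, 1]
def kap : ℝ → ℝ → ℝ → Fin 3 → ℝ := fun S t s => jmap ((R S t s)ᵀ * pd d1 R S t s)
def om : ℝ → ℝ → ℝ → Fin 3 → ℝ := fun S t s => jmap ((R S t s)ᵀ * pd d2 R S t s)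
def wf : ℝ → ℝ → ℝ → Fin 3 → ℝ := fun S t s => jmap ((R S t s)ᵀ * pd d3 R S t s)
def nf : ℝ → ℝ → ℝ → Fin 3 → ℝ := fun S t s => R S t s *ᵥ (G *ᵥ eps φ R S t s)
def Lag : ℝ → ℝ → ℝ → ℝ := fun S t s =>
  (1 / 2) * (ρA * (pd d2 φ S t s ⬝ᵥ pd d2 φ S t s) + om R S t s ⬝ᵥ (J *ᵥ om R S t s)
    - eps φ R S t s ⬝ᵥ (G *ᵥ eps φ R S t s) - kap R S t s ⬝ᵥ (H *ᵥ kap R S t s))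
def Af : ℝ → ℝ → ℝ → ℝ := fun S t s =>
  ρA * (pd d2 φ S t s ⬝ᵥ pd d3 φ S t s) + wf R S t s ⬝ᵥ (J *ᵥ om R S t s)
def Bf : ℝ → ℝ → ℝ → ℝ := fun S t s =>
  pd d3 φ S t s ⬝ᵥ nf φ R G S t s + wf R S t s ⬝ᵥ (H *ᵥ kap R S t s)

def Deps3 : ℝ → ℝ → ℝ → Fin 3 → ℝ := fun S t s =>
  (pd d3 R S t s)ᵀ *ᵥ pd d1 φ S t s + (R S t s)ᵀ *ᵥ pd d3 (pd d1 φ) S t s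
def DepsS : ℝ → ℝ → ℝ → Fin 3 → ℝ := fun S t s =>
  (pd d1 R S t s)ᵀ *ᵥ pd d1 φ S t s + (R S t s)ᵀ *ᵥ pd d1 (pd d1 φ) S t s
def Dkap3 : ℝ → ℝ → ℝ → Fin 3 → ℝ := fun S t s =>
  jmap ((pd d3 R S t s)ᵀ * pd d1 R S t s + (R S t s)ᵀ * pd d3 (pd d1 R) S t s)
def DkapS : ℝ → ℝ → ℝ → Fin 3 → ℝ := fun S t s =>
  jmap ((pd d1 R S t s)ᵀ * pd d1 R S t s + (R S t s)ᵀ * pd d1 (pd d1 R) S t s)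
def Dom3 : ℝ → ℝ → ℝ → Fin 3 → ℝ := fun S t s =>
  jmap ((pd d3 R S t s)ᵀ * pd d2 R S t s + (R S t s)ᵀ * pd d3 (pd d2 R) S t s)
def Domt : ℝ → ℝ → ℝ → Fin 3 → ℝ := fun S t s =>
  jmap ((pd d2 R S t s)ᵀ * pd d2 R S t s + (R S t s)ᵀ * pd d2 (pd d2 R) S t s)
def Dwt : ℝ → ℝ → ℝ → Fin 3 → ℝ := fun S t s =>
  jmap ((pd d2 R S t s)ᵀ * pd d3 R S t s + (R S t s)ᵀ * pd d2 (pd d3 R) S t s)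
def DwS : ℝ → ℝ → ℝ → Fin 3 → ℝ := fun S t s =>
  jmap ((pd d1 R S t s)ᵀ * pd d3 R S t s + (R S t s)ᵀ * pd d1 (pd d3 R) S t s)
def Dnf : ℝ → ℝ → ℝ → Fin 3 → ℝ := fun S t s =>
  pd d1 R S t s *ᵥ (G *ᵥ eps φ R S t s) + R S t s *ᵥ (G *ᵥ DepsS φ R S t s)
def Dmf : ℝ → ℝ → ℝ → Fin 3 → ℝ := fun S t s =>
  pd d1 R S t s *ᵥ (H *ᵥ kap R S t s) + R S t s *ᵥ (H *ᵥ DkapS R S t s)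
def Dpf : ℝ → ℝ → ℝ → Fin 3 → ℝ := fun S t s =>
  pd d2 R S t s *ᵥ (J *ᵥ om R S t s) + R S t s *ᵥ (J *ᵥ Domt R S t s)
def DLag : ℝ → ℝ → ℝ → ℝ := fun S t s =>
  (1 / 2) * (ρA * (pd d3 (pd d2 φ) S t s ⬝ᵥ pd d2 φ S t s + pd d2 φ S t s ⬝ᵥ pd d3 (pd d2 φ) S t s)
    + (Dom3 R S t s ⬝ᵥ (J *ᵥ om R S t s) + om R S t s ⬝ᵥ (J *ᵥ Dom3 R S t s))
    - (Deps3 φ R S t s ⬝ᵥ (G *ᵥ eps φ R S t s) + eps φ R S t s ⬝ᵥ (G *ᵥ Deps3 φ R S t s))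
    - (Dkap3 R S t s ⬝ᵥ (H *ᵥ kap R S t s) + kap R S t s ⬝ᵥ (H *ᵥ Dkap3 R S t s)))
def DAf : ℝ → ℝ → ℝ → ℝ := fun S t s =>
  ρA * (pd d2 (pd d2 φ) S t s ⬝ᵥ pd d3 φ S t s + pd d2 φ S t s ⬝ᵥ pd d2 (pd d3 φ) S t s)
    + (Dwt R S t s ⬝ᵥ (J *ᵥ om R S t s) + wf R S t s ⬝ᵥ (J *ᵥ Domt R S t s))
def DBf : ℝ → ℝ → ℝ → ℝ := fun S t s =>
  (pd d1 (pd d3 φ) S t s ⬝ᵥ nf φ R G S t s + pd d3 φ S t s ⬝ᵥ Dnf φ R G S t s)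
    + (DwS R S t s ⬝ᵥ (H *ᵥ kap R S t s) + wf R S t s ⬝ᵥ (H *ᵥ DkapS R S t s))

end Fields

section Derivatives

variable {φ : ℝ → ℝ → ℝ → Fin 3 → ℝ} {R : ℝ → ℝ → ℝ → Matrix (Fin 3) (Fin 3) ℝ}
variable (G H J : Matrix (Fin 3) (Fin 3) ℝ) (ρA : ℝ)
variable (hφ : ContDiff ℝ (⊤ : ℕ∞) (uc φ)) (hR : ContDiff ℝ (⊤ : ℕ∞) (uc R))

section
include hφ hR

theorem hasDerivAt_eps3 (S t s : ℝ) :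
    HasDerivAt (fun s' => eps φ R S t s') (Deps3 φ R S t s) s :=
  (((hasDerivAt_pd3 hR S t s).transp.mulVecc
    (hasDerivAt_pd3 (contDiff_uc_pd hφ d1) S t s)).subConst _)

theorem hasDerivAt_epsS (S t s : ℝ) :
    HasDerivAt (fun S' => eps φ R S' t s) (DepsS φ R S t s) S :=
  (((hasDerivAt_pd1 hR S t s).transp.mulVecc
    (hasDerivAt_pd1 (contDiff_uc_pd hφ d1) S t s)).subConst _)

theorem hasDerivAt_nf1 (S t s : ℝ) :
    HasDerivAt (fun S' => nf φ R G S' t s) (Dnf φ R G S t s) S :=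
  (hasDerivAt_pd1 hR S t s).mulVecc ((hasDerivAt_epsS hφ hR S t s).constMulVec G)

end

section
include hR

theorem hasDerivAt_kap3 (S t s : ℝ) :
    HasDerivAt (fun s' => kap R S t s') (Dkap3 R S t s) s :=
  (((hasDerivAt_pd3 hR S t s).transp.matMul
    (hasDerivAt_pd3 (contDiff_uc_pd hR d1) S t s)).jmapD)

theorem hasDerivAt_kapS (S t s : ℝ) :
    HasDerivAt (fun S' => kap R S' t s) (DkapS R S t s) S :=
  (((hasDerivAt_pd1 hR S t s).transp.matMul
    (hasDerivAt_pd1 (contDiff_uc_pd hR d1) S t s)).jmapD)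

theorem hasDerivAt_om3 (S t s : ℝ) :
    HasDerivAt (fun s' => om R S t s') (Dom3 R S t s) s :=
  (((hasDerivAt_pd3 hR S t s).transp.matMul
    (hasDerivAt_pd3 (contDiff_uc_pd hR d2) S t s)).jmapD)

theorem hasDerivAt_omt (S t s : ℝ) :
    HasDerivAt (fun t' => om R S t' s) (Domt R S t s) t :=
  (((hasDerivAt_pd2 hR S t s).transp.matMul
    (hasDerivAt_pd2 (contDiff_uc_pd hR d2) S t s)).jmapD)

theorem hasDerivAt_wft (S t s : ℝ) :
    HasDerivAt (fun t' => wf R S t' s) (Dwt R S t s) t :=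
  (((hasDerivAt_pd2 hR S t s).transp.matMul
    (hasDerivAt_pd2 (contDiff_uc_pd hR d3) S t s)).jmapD)

theorem hasDerivAt_wfS (S t s : ℝ) :
    HasDerivAt (fun S' => wf R S' t s) (DwS R S t s) S :=
  (((hasDerivAt_pd1 hR S t s).transp.matMul
    (hasDerivAt_pd1 (contDiff_uc_pd hR d3) S t s)).jmapD)

theorem hasDerivAt_mf1 (S t s : ℝ) :
    HasDerivAt (fun S' => R S' t s *ᵥ (H *ᵥ kap R S' t s)) (Dmf R H S t s) S :=
  (hasDerivAt_pd1 hR S t s).mulVecc ((hasDerivAt_kapS hR S t s).constMulVec H)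

theorem hasDerivAt_pf2 (S t s : ℝ) :
    HasDerivAt (fun t' => R S t' s *ᵥ (J *ᵥ om R S t' s)) (Dpf R J S t s) t :=
  (hasDerivAt_pd2 hR S t s).mulVecc ((hasDerivAt_omt hR S t s).constMulVec J)

end

section
include hφ hR

theorem hasDerivAt_Lag3 (S t s : ℝ) :
    HasDerivAt (fun s' => Lag φ R G H J ρA S t s') (DLag φ R G H J ρA S t s) s := by
  have h1 : HasDerivAt (fun s' => pd d2 φ S t s') (pd d3 (pd d2 φ) S t s) s :=
    hasDerivAt_pd3 (contDiff_uc_pd hφ d2) S t s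
  have hom := hasDerivAt_om3 hR S t s
  have heps := hasDerivAt_eps3 hφ hR S t s
  have hkap := hasDerivAt_kap3 hR S t s
  exact HasDerivAt.const_mul (1 / 2)
    (((((h1.dotProd h1).const_mul ρA).add (hom.dotProd (hom.constMulVec J))).sub
      (heps.dotProd (heps.constMulVec G))).sub (hkap.dotProd (hkap.constMulVec H)))

theorem hasDerivAt_Af2 (S t s : ℝ) :
    HasDerivAt (fun t' => Af φ R J ρA S t' s) (DAf φ R J ρA S t s) t := by
  have h2 : HasDerivAt (fun t' => pd d2 φ S t' s) (pd d2 (pd d2 φ) S t s) t :=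
    hasDerivAt_pd2 (contDiff_uc_pd hφ d2) S t s
  have h3 : HasDerivAt (fun t' => pd d3 φ S t' s) (pd d2 (pd d3 φ) S t s) t :=
    hasDerivAt_pd2 (contDiff_uc_pd hφ d3) S t s
  have hw := hasDerivAt_wft hR S t s
  have hom := hasDerivAt_omt hR S t s
  exact ((h2.dotProd h3).const_mul ρA).add (hw.dotProd (hom.constMulVec J))

theorem hasDerivAt_Bf1 (S t s : ℝ) :
    HasDerivAt (fun S' => Bf φ R G H S' t s) (DBf φ R G H S t s) S := by
  have h3 : HasDerivAt (fun S' => pd d3 φ S' t s) (pd d1 (pd d3 φ) S t s) S :=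
    hasDerivAt_pd1 (contDiff_uc_pd hφ d3) S t s
  have hn := hasDerivAt_nf1 G hφ hR S t s
  have hw := hasDerivAt_wfS hR S t s
  have hk := hasDerivAt_kapS hR S t s
  exact (h3.dotProd hn).add (hw.dotProd (hk.constMulVec H))

/-! ### Smoothness of the fields -/

theorem contDiff_eps : ContDiff ℝ (⊤ : ℕ∞) (uc (eps φ R)) :=
  (hR.transpC.mulVecC (contDiff_uc_pd hφ d1)).subConstC _

theorem contDiff_nf : ContDiff ℝ (⊤ : ℕ∞) (uc (nf φ R G)) :=
  hR.mulVecC (contDiff_const.mulVecC (contDiff_eps hφ hR))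

end

section
include hR

theorem contDiff_kap : ContDiff ℝ (⊤ : ℕ∞) (uc (kap R)) :=
  (hR.transpC.matMulC (contDiff_uc_pd hR d1)).jmapC

theorem contDiff_om : ContDiff ℝ (⊤ : ℕ∞) (uc (om R)) :=
  (hR.transpC.matMulC (contDiff_uc_pd hR d2)).jmapC

theorem contDiff_wf : ContDiff ℝ (⊤ : ℕ∞) (uc (wf R)) :=
  (hR.transpC.matMulC (contDiff_uc_pd hR d3)).jmapC

end

section
include hφ hR

theorem contDiff_Lag : ContDiff ℝ (⊤ : ℕ∞) (uc (Lag φ R G H J ρA)) := by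
  have h2 := contDiff_uc_pd hφ d2
  have hom := contDiff_om hR
  have heps := contDiff_eps hφ hR
  have hkap := contDiff_kap hR
  exact ContDiff.mul contDiff_const
    ((((ContDiff.mul contDiff_const (h2.dotProd h2)).add
        (hom.dotProd (contDiff_const.mulVecC hom))).sub
      (heps.dotProd (contDiff_const.mulVecC heps))).sub
        (hkap.dotProd (contDiff_const.mulVecC hkap)))

theorem contDiff_Af : ContDiff ℝ (⊤ : ℕ∞) (uc (Af φ R J ρA)) := by
  exact (ContDiff.mul contDiff_const
      ((contDiff_uc_pd hφ d2).dotProd (contDiff_uc_pd hφ d3))).add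
    ((contDiff_wf hR).dotProd (contDiff_const.mulVecC (contDiff_om hR)))

theorem contDiff_DepsS : ContDiff ℝ (⊤ : ℕ∞) (uc (DepsS φ R)) :=
  ((contDiff_uc_pd hR d1).transpC.mulVecC (contDiff_uc_pd hφ d1)).add
    (hR.transpC.mulVecC (contDiff_uc_pd (contDiff_uc_pd hφ d1) d1))

theorem contDiff_Dnf : ContDiff ℝ (⊤ : ℕ∞) (uc (Dnf φ R G)) :=
  ((contDiff_uc_pd hR d1).mulVecC
      (contDiff_const.mulVecC (contDiff_eps hφ hR))).add
    (hR.mulVecC (contDiff_const.mulVecC (contDiff_DepsS hφ hR)))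

theorem contDiff_DLag : ContDiff ℝ (⊤ : ℕ∞) (uc (DLag φ R G H J ρA)) := by
  have h32 := contDiff_uc_pd (contDiff_uc_pd hφ d2) d3
  have h2 := contDiff_uc_pd hφ d2
  have hom := contDiff_om hR
  have heps := contDiff_eps hφ hR
  have hkap := contDiff_kap hR
  have hDom3 : ContDiff ℝ (⊤ : ℕ∞) (uc (Dom3 R)) :=
    (((contDiff_uc_pd hR d3).transpC.matMulC (contDiff_uc_pd hR d2)).add
      (hR.transpC.matMulC (contDiff_uc_pd (contDiff_uc_pd hR d2) d3))).jmapC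
  have hDeps3 : ContDiff ℝ (⊤ : ℕ∞) (uc (Deps3 φ R)) :=
    ((contDiff_uc_pd hR d3).transpC.mulVecC (contDiff_uc_pd hφ d1)).add
      (hR.transpC.mulVecC (contDiff_uc_pd (contDiff_uc_pd hφ d1) d3))
  have hDkap3 : ContDiff ℝ (⊤ : ℕ∞) (uc (Dkap3 R)) :=
    (((contDiff_uc_pd hR d3).transpC.matMulC (contDiff_uc_pd hR d1)).add
      (hR.transpC.matMulC (contDiff_uc_pd (contDiff_uc_pd hR d1) d3))).jmapC
  exact ContDiff.mul contDiff_const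
    ((((ContDiff.mul contDiff_const ((h32.dotProd h2).add (h2.dotProd h32))).add
        ((hDom3.dotProd (contDiff_const.mulVecC hom)).add
          (hom.dotProd (contDiff_const.mulVecC hDom3)))).sub
      ((hDeps3.dotProd (contDiff_const.mulVecC heps)).add
        (heps.dotProd (contDiff_const.mulVecC hDeps3)))).sub
      ((hDkap3.dotProd (contDiff_const.mulVecC hkap)).add
        (hkap.dotProd (contDiff_const.mulVecC hDkap3))))

theorem contDiff_DAf : ContDiff ℝ (⊤ : ℕ∞) (uc (DAf φ R J ρA)) := by
  have hDwt : ContDiff ℝ (⊤ : ℕ∞) (uc (Dwt R)) :=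
    (((contDiff_uc_pd hR d2).transpC.matMulC (contDiff_uc_pd hR d3)).add
      (hR.transpC.matMulC (contDiff_uc_pd (contDiff_uc_pd hR d3) d2))).jmapC
  have hDomt : ContDiff ℝ (⊤ : ℕ∞) (uc (Domt R)) :=
    (((contDiff_uc_pd hR d2).transpC.matMulC (contDiff_uc_pd hR d2)).add
      (hR.transpC.matMulC (contDiff_uc_pd (contDiff_uc_pd hR d2) d2))).jmapC
  exact (ContDiff.mul contDiff_const
      (((contDiff_uc_pd (contDiff_uc_pd hφ d2) d2).dotProd (contDiff_uc_pd hφ d3)).add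
        ((contDiff_uc_pd hφ d2).dotProd (contDiff_uc_pd (contDiff_uc_pd hφ d3) d2)))).add
    ((hDwt.dotProd (contDiff_const.mulVecC (contDiff_om hR))).add
      ((contDiff_wf hR).dotProd (contDiff_const.mulVecC hDomt)))

theorem contDiff_DBf : ContDiff ℝ (⊤ : ℕ∞) (uc (DBf φ R G H)) := by
  have hDwS : ContDiff ℝ (⊤ : ℕ∞) (uc (DwS R)) :=
    (((contDiff_uc_pd hR d1).transpC.matMulC (contDiff_uc_pd hR d3)).add
      (hR.transpC.matMulC (contDiff_uc_pd (contDiff_uc_pd hR d3) d1))).jmapC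
  have hDkapS : ContDiff ℝ (⊤ : ℕ∞) (uc (DkapS R)) :=
    (((contDiff_uc_pd hR d1).transpC.matMulC (contDiff_uc_pd hR d1)).add
      (hR.transpC.matMulC (contDiff_uc_pd (contDiff_uc_pd hR d1) d1))).jmapC
  exact (((contDiff_uc_pd (contDiff_uc_pd hφ d3) d1).dotProd (contDiff_nf G hφ hR)).add
      ((contDiff_uc_pd hφ d3).dotProd (contDiff_Dnf G hφ hR))).add
    ((hDwS.dotProd (contDiff_const.mulVecC (contDiff_kap hR))).add
      ((contDiff_wf hR).dotProd (contDiff_const.mulVecC hDkapS)))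

end

end Derivatives

section Pointwise

variable {φ : ℝ → ℝ → ℝ → Fin 3 → ℝ} {R : ℝ → ℝ → ℝ → Matrix (Fin 3) (Fin 3) ℝ}
variable {G H J : Matrix (Fin 3) (Fin 3) ℝ} {ρA : ℝ}

theorem pointwise_identity (hφ : ContDiff ℝ (⊤ : ℕ∞) (uc φ)) (hR : ContDiff ℝ (⊤ : ℕ∞) (uc R))
    (hSO : ∀ S t s, (R S t s)ᵀ * R S t s = 1 ∧ (R S t s).det = 1)
    (hG : Gᵀ = G) (hH : Hᵀ = H) (hJ : Jᵀ = J)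
    (heq1 : ∀ S t, Dnf φ R G S t 0 = ρA • pd d2 (pd d2 φ) S t 0)
    (heq2 : ∀ S t, Dmf R H S t 0 + pd d1 φ S t 0 ⨯₃ nf φ R G S t 0 = Dpf R J S t 0)
    (S t : ℝ) :
    DLag φ R G H J ρA S t 0 = DAf φ R J ρA S t 0 - DBf φ R G H S t 0 := by
  have c1 : pd d3 (pd d2 φ) S t 0 = pd d2 (pd d3 φ) S t 0 := pd_comm hφ d3 d2 S t 0
  have c2 : pd d3 (pd d1 φ) S t 0 = pd d1 (pd d3 φ) S t 0 := pd_comm hφ d3 d1 S t 0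
  have c3 : pd d3 (pd d2 R) S t 0 = pd d2 (pd d3 R) S t 0 := pd_comm hR d3 d2 S t 0
  have c4 : pd d3 (pd d1 R) S t 0 = pd d1 (pd d3 R) S t 0 := pd_comm hR d3 d1 S t 0
  have hq1v := heq1 S t
  have hq2v := heq2 S t
  simp only [DLag, DAf, DBf, Dom3, Domt, Dwt, DwS, Deps3, DepsS, Dkap3, DkapS, Dnf, Dmf,
    Dpf, nf, eps, kap, om, wf] at hq1v hq2v ⊢
  rw [c1, c2, c3, c4]
  set r := R S t 0 with hr
  set rS := pd d1 R S t 0 with hrSd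
  set rt := pd d2 R S t 0 with hrtd
  set rs := pd d3 R S t 0 with hrsd
  set v1 := pd d1 φ S t 0 with hv1
  set v2 := pd d2 φ S t 0 with hv2
  set v3 := pd d3 φ S t 0 with hv3
  set vtt := pd d2 (pd d2 φ) S t 0 with hvtt
  set v3t := pd d2 (pd d3 φ) S t 0 with hv3t
  set v3S := pd d1 (pd d3 φ) S t 0 with hv3S
  set v11 := pd d1 (pd d1 φ) S t 0 with hv11
  set rtt := pd d2 (pd d2 R) S t 0 with hrtt
  set r3t := pd d2 (pd d3 R) S t 0 with hr3t
  set r3S := pd d1 (pd d3 R) S t 0 with hr3S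
  set r11 := pd d1 (pd d1 R) S t 0 with hr11
  have hOrth : rᵀ * r = 1 := (hSO S t 0).1
  have hdet : r.det = 1 := (hSO S t 0).2
  have hrrT : r * rᵀ = 1 := SO3.mul_transpose hOrth
  have hskew : ∀ rX : Matrix (Fin 3) (Fin 3) ℝ,
      rXᵀ * r + rᵀ * rX = 0 → (rᵀ * rX)ᵀ = -(rᵀ * rX) := by
    intro rX hz
    rw [Matrix.transpose_mul, Matrix.transpose_transpose]
    exact eq_neg_of_add_eq_zero_left hz
  have hzS : rSᵀ * r + rᵀ * rS = 0 := by
    have hfun : (fun S' => (R S' t 0)ᵀ * R S' t 0) = fun _ => (1 : Matrix (Fin 3) (Fin 3) ℝ) :=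
      funext fun S' => (hSO S' t 0).1
    have hd : HasDerivAt (fun S' => (R S' t 0)ᵀ * R S' t 0)
        ((pd d1 R S t 0)ᵀ * R S t 0 + (R S t 0)ᵀ * pd d1 R S t 0) S :=
      ((hasDerivAt_pd1 hR S t 0).transp).matMul (hasDerivAt_pd1 hR S t 0)
    have h0 : HasDerivAt (fun S' => (R S' t 0)ᵀ * R S' t 0) 0 S := by
      rw [hfun]; exact hasDerivAt_const S 1
    exact hd.unique h0
  have hzt : rtᵀ * r + rᵀ * rt = 0 := by
    have hfun : (fun t' => (R S t' 0)ᵀ * R S t' 0) = fun _ => (1 : Matrix (Fin 3) (Fin 3) ℝ) :=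
      funext fun t' => (hSO S t' 0).1
    have hd : HasDerivAt (fun t' => (R S t' 0)ᵀ * R S t' 0)
        ((pd d2 R S t 0)ᵀ * R S t 0 + (R S t 0)ᵀ * pd d2 R S t 0) t :=
      ((hasDerivAt_pd2 hR S t 0).transp).matMul (hasDerivAt_pd2 hR S t 0)
    have h0 : HasDerivAt (fun t' => (R S t' 0)ᵀ * R S t' 0) 0 t := by
      rw [hfun]; exact hasDerivAt_const t 1
    exact hd.unique h0
  have hzs : rsᵀ * r + rᵀ * rs = 0 := by
    have hfun : (fun s' => (R S t s')ᵀ * R S t s') = fun _ => (1 : Matrix (Fin 3) (Fin 3) ℝ) :=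
      funext fun s' => (hSO S t s').1
    have hd : HasDerivAt (fun s' => (R S t s')ᵀ * R S t s')
        ((pd d3 R S t 0)ᵀ * R S t 0 + (R S t 0)ᵀ * pd d3 R S t 0) 0 :=
      ((hasDerivAt_pd3 hR S t 0).transp).matMul (hasDerivAt_pd3 hR S t 0)
    have h0 : HasDerivAt (fun s' => (R S t s')ᵀ * R S t s') 0 0 := by
      rw [hfun]; exact hasDerivAt_const (0 : ℝ) 1
    exact hd.unique h0
  have hKskew : (rᵀ * rS)ᵀ = -(rᵀ * rS) := hskew rS hzS
  have hOskew : (rᵀ * rt)ᵀ = -(rᵀ * rt) := hskew rt hzt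
  have hWskew : (rᵀ * rs)ᵀ = -(rᵀ * rs) := hskew rs hzs
  have key : ∀ a b : Matrix (Fin 3) (Fin 3) ℝ, (rᵀ * a)ᵀ * (rᵀ * b) = aᵀ * b := by
    intro a b
    rw [Matrix.transpose_mul, Matrix.transpose_transpose, Matrix.mul_assoc,
      ← Matrix.mul_assoc r rᵀ b, hrrT, Matrix.one_mul]
  have base : ∀ u v : Fin 3 → ℝ, (r *ᵥ u) ⬝ᵥ v = u ⬝ᵥ (rᵀ *ᵥ v) := by
    intro u v
    have h := dot_transpose_mulVec rᵀ u v
    rwa [Matrix.transpose_transpose] at h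
  have hu : r *ᵥ (rᵀ *ᵥ v1) = v1 := by
    rw [Matrix.mulVec_mulVec, hrrT, Matrix.one_mulVec]
  have hcomm : ∀ rX : Matrix (Fin 3) (Fin 3) ℝ, (rᵀ * rX)ᵀ = -(rᵀ * rX) →
      ∀ rY : Matrix (Fin 3) (Fin 3) ℝ,
      jmap (rsᵀ * rX + rᵀ * rY) = jmap (rXᵀ * rs + rᵀ * rY)
        + jmap (rᵀ * rX) ⨯₃ jmap (rᵀ * rs) := by
    intro rX hXskew rY
    have h1 : rsᵀ * rX = -((rᵀ * rs) * (rᵀ * rX)) := by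
      have hk := key rs rX
      rw [hWskew, Matrix.neg_mul] at hk
      exact hk.symm
    have h2 : rXᵀ * rs = -((rᵀ * rX) * (rᵀ * rs)) := by
      have hk := key rX rs
      rw [hXskew, Matrix.neg_mul] at hk
      exact hk.symm
    have h3 : (rsᵀ * rX + rᵀ * rY) - (rXᵀ * rs + rᵀ * rY)
        = (rᵀ * rX) * (rᵀ * rs) - (rᵀ * rs) * (rᵀ * rX) := by
      rw [h1, h2]; abel
    have h4 : jmap (rsᵀ * rX + rᵀ * rY) - jmap (rXᵀ * rs + rᵀ * rY)
        = jmap (rᵀ * rX) ⨯₃ jmap (rᵀ * rs) := by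
      rw [← jmap_sub, h3]
      exact jmap_commutator hXskew hWskew
    exact eq_add_of_sub_eq' h4
  have F1 := hcomm rt hOskew r3t
  have F1' := hcomm rS hKskew r3S
  have hrs_eq : rs = r * (rᵀ * rs) := by
    rw [← Matrix.mul_assoc, hrrT, Matrix.one_mul]
  have hrsT : rsᵀ *ᵥ v1 = -(jmap (rᵀ * rs) ⨯₃ (rᵀ *ᵥ v1)) := by
    conv_lhs => rw [hrs_eq]
    rw [Matrix.transpose_mul, ← Matrix.mulVec_mulVec, hWskew, Matrix.neg_mulVec,
      skew_mulVec hWskew]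
  have hcrossT : ∀ a b : Fin 3 → ℝ, rᵀ *ᵥ (a ⨯₃ b) = (rᵀ *ᵥ a) ⨯₃ (rᵀ *ᵥ b) := by
    intro a b
    have h1 : (rᵀ)ᵀ * rᵀ = 1 := by rw [Matrix.transpose_transpose]; exact hrrT
    have h2 : (rᵀ).det = 1 := by rw [Matrix.det_transpose]; exact hdet
    exact (SO3.cross h1 h2 a b).symm
  have hTn : rᵀ *ᵥ (r *ᵥ (G *ᵥ (rᵀ *ᵥ v1 - ![0, 0, 1]))) = G *ᵥ (rᵀ *ᵥ v1 - ![0, 0, 1]) := by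
    rw [Matrix.mulVec_mulVec, hOrth, Matrix.one_mulVec]
  have E1 : (rsᵀ *ᵥ v1) ⬝ᵥ (G *ᵥ (rᵀ *ᵥ v1 - ![0, 0, 1]))
      = -((r *ᵥ jmap (rᵀ * rs)) ⬝ᵥ (v1 ⨯₃ (r *ᵥ (G *ᵥ (rᵀ *ᵥ v1 - ![0, 0, 1]))))) := by
    conv_lhs => rw [hrsT, neg_dotProduct, dotProduct_comm, triple_product_permutation]
    conv_rhs => rw [base, hcrossT, hTn]
  have E2 : (rᵀ *ᵥ v3S) ⬝ᵥ (G *ᵥ (rᵀ *ᵥ v1 - ![0, 0, 1])) = v3S ⬝ᵥ (r *ᵥ (G *ᵥ (rᵀ *ᵥ v1 - ![0, 0, 1]))) :=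
    dot_transpose_mulVec r v3S (G *ᵥ (rᵀ *ᵥ v1 - ![0, 0, 1]))
  have F2 : (jmap (rᵀ * rt) ⨯₃ jmap (rᵀ * rs)) ⬝ᵥ (J *ᵥ jmap (rᵀ * rt))
      = -(jmap (rᵀ * rs) ⬝ᵥ (jmap (rᵀ * rt) ⨯₃ (J *ᵥ jmap (rᵀ * rt)))) := by
    rw [← cross_anticomm (jmap (rᵀ * rs)) (jmap (rᵀ * rt))]
    conv_lhs => rw [neg_dotProduct, dotProduct_comm, triple_product_permutation]
  have F2' : (jmap (rᵀ * rS) ⨯₃ jmap (rᵀ * rs)) ⬝ᵥ (H *ᵥ jmap (rᵀ * rS))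
      = -(jmap (rᵀ * rs) ⬝ᵥ (jmap (rᵀ * rS) ⨯₃ (H *ᵥ jmap (rᵀ * rS)))) := by
    rw [← cross_anticomm (jmap (rᵀ * rs)) (jmap (rᵀ * rS))]
    conv_lhs => rw [neg_dotProduct, dotProduct_comm, triple_product_permutation]
  have F3 : (r *ᵥ jmap (rᵀ * rs)) ⬝ᵥ (rt *ᵥ (J *ᵥ jmap (rᵀ * rt)))
      = jmap (rᵀ * rs) ⬝ᵥ (jmap (rᵀ * rt) ⨯₃ (J *ᵥ jmap (rᵀ * rt))) := by
    rw [base, Matrix.mulVec_mulVec, skew_mulVec hOskew]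
  have F3' : (r *ᵥ jmap (rᵀ * rs)) ⬝ᵥ (rS *ᵥ (H *ᵥ jmap (rᵀ * rS)))
      = jmap (rᵀ * rs) ⬝ᵥ (jmap (rᵀ * rS) ⨯₃ (H *ᵥ jmap (rᵀ * rS))) := by
    rw [base, Matrix.mulVec_mulVec, skew_mulVec hKskew]
  have F4 : (r *ᵥ jmap (rᵀ * rs)) ⬝ᵥ (r *ᵥ (J *ᵥ jmap (rtᵀ * rt + rᵀ * rtt)))
      = jmap (rᵀ * rs) ⬝ᵥ (J *ᵥ jmap (rtᵀ * rt + rᵀ * rtt)) := SO3.dot hOrth _ _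
  have F4' : (r *ᵥ jmap (rᵀ * rs)) ⬝ᵥ (r *ᵥ (H *ᵥ jmap (rSᵀ * rS + rᵀ * r11)))
      = jmap (rᵀ * rs) ⬝ᵥ (H *ᵥ jmap (rSᵀ * rS + rᵀ * r11)) := SO3.dot hOrth _ _
  have comm1 : v3t ⬝ᵥ v2 = v2 ⬝ᵥ v3t := dotProduct_comm _ _
  have comm2 : v3 ⬝ᵥ vtt = vtt ⬝ᵥ v3 := dotProduct_comm _ _
  have SJ1 : jmap (rᵀ * rt) ⬝ᵥ (J *ᵥ jmap (rtᵀ * rs + rᵀ * r3t)) = jmap (rtᵀ * rs + rᵀ * r3t) ⬝ᵥ (J *ᵥ jmap (rᵀ * rt)) := dot_symm_of_symm hJ _ _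
  have SJ2 : jmap (rᵀ * rt) ⬝ᵥ (J *ᵥ (jmap (rᵀ * rt) ⨯₃ jmap (rᵀ * rs))) = (jmap (rᵀ * rt) ⨯₃ jmap (rᵀ * rs)) ⬝ᵥ (J *ᵥ jmap (rᵀ * rt)) := dot_symm_of_symm hJ _ _
  have SG1 : (rᵀ *ᵥ v1 - ![0, 0, 1]) ⬝ᵥ (G *ᵥ (rsᵀ *ᵥ v1)) = (rsᵀ *ᵥ v1) ⬝ᵥ (G *ᵥ (rᵀ *ᵥ v1 - ![0, 0, 1])) := dot_symm_of_symm hG _ _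
  have SG2 : (rᵀ *ᵥ v1 - ![0, 0, 1]) ⬝ᵥ (G *ᵥ (rᵀ *ᵥ v3S)) = (rᵀ *ᵥ v3S) ⬝ᵥ (G *ᵥ (rᵀ *ᵥ v1 - ![0, 0, 1])) := dot_symm_of_symm hG _ _
  have SH1 : jmap (rᵀ * rS) ⬝ᵥ (H *ᵥ jmap (rSᵀ * rs + rᵀ * r3S)) = jmap (rSᵀ * rs + rᵀ * r3S) ⬝ᵥ (H *ᵥ jmap (rᵀ * rS)) := dot_symm_of_symm hH _ _
  have SH2 : jmap (rᵀ * rS) ⬝ᵥ (H *ᵥ (jmap (rᵀ * rS) ⨯₃ jmap (rᵀ * rs))) = (jmap (rᵀ * rS) ⨯₃ jmap (rᵀ * rs)) ⬝ᵥ (H *ᵥ jmap (rᵀ * rS)) := dot_symm_of_symm hH _ _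
  have hsmul : v3 ⬝ᵥ (ρA • vtt) = ρA * (v3 ⬝ᵥ vtt) := by
    simp [dotProduct, Fin.sum_univ_three, Pi.smul_apply, smul_eq_mul]
    ring
  have hq1dot := congrArg (fun z => v3 ⬝ᵥ z) hq1v
  simp only [Matrix.mulVec_add, dotProduct_add] at hq1dot
  have hq2dot := congrArg (fun z => (r *ᵥ jmap (rᵀ * rs)) ⬝ᵥ z) hq2v
  simp only [Matrix.mulVec_add, dotProduct_add] at hq2dot
  rw [F1, F1']
  simp only [add_dotProduct, dotProduct_add, Matrix.mulVec_add]
  linear_combination (ρA / 2) * comm1 + (1 / 2) * SJ1 + (1 / 2) * SJ2 + F2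
    - (1 / 2) * SG1 - (1 / 2) * SG2 - E1 - E2 - (1 / 2) * SH1 - (1 / 2) * SH2 - F2'
    + hq1dot + hsmul + ρA * comm2 + F3 + F4 - F3' - F4' + hq2dot

end Pointwise

section Adapters

variable {g : ℝ → ℝ → ℝ → ℝ}

theorem cont3_slice1 (hg : Continuous fun p : ℝ × ℝ × ℝ => g p.1 p.2.1 p.2.2) (t s : ℝ) :
    Continuous fun S => g S t s :=
  hg.comp (show Continuous fun S : ℝ => ((S, t, s) : ℝ × ℝ × ℝ) by fun_prop)

theorem cont3_swap23 (hg : Continuous fun p : ℝ × ℝ × ℝ => g p.1 p.2.1 p.2.2) :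
    Continuous fun p : ℝ × ℝ × ℝ => g p.1 p.2.2 p.2.1 :=
  hg.comp (show Continuous fun p : ℝ × ℝ × ℝ => ((p.1, p.2.2, p.2.1) : ℝ × ℝ × ℝ) by fun_prop)

theorem cont3_slice_mid (hg : Continuous fun p : ℝ × ℝ × ℝ => g p.1 p.2.1 p.2.2) (t : ℝ) :
    Continuous fun p : ℝ × ℝ => g p.2 t p.1 :=
  hg.comp (show Continuous fun p : ℝ × ℝ => ((p.2, t, p.1) : ℝ × ℝ × ℝ) by fun_prop)

theorem cont3_flip12 (hg : Continuous fun p : ℝ × ℝ × ℝ => g p.1 p.2.1 p.2.2) (s : ℝ) :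
    Continuous fun p : ℝ × ℝ => g p.2 p.1 s :=
  hg.comp (show Continuous fun p : ℝ × ℝ => ((p.2, p.1, s) : ℝ × ℝ × ℝ) by fun_prop)

/-- Derivative of a double interval integral in an exterior parameter. -/
theorem hasDerivAt_double_integral {Lg DLg : ℝ → ℝ → ℝ → ℝ} {a b c d : ℝ}
    (hL : Continuous fun p : ℝ × ℝ × ℝ => Lg p.1 p.2.1 p.2.2)
    (hDL : Continuous fun p : ℝ × ℝ × ℝ => DLg p.1 p.2.1 p.2.2)
    (hd : ∀ S t s, HasDerivAt (fun s' => Lg S t s') (DLg S t s) s) (s₀ : ℝ) :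
    HasDerivAt (fun s => ∫ t in a..b, ∫ S in c..d, Lg S t s)
      (∫ t in a..b, ∫ S in c..d, DLg S t s₀) s₀ := by
  refine hasDerivAt_param_integral (f := fun s t => ∫ S in c..d, Lg S t s)
    (f' := fun s t => ∫ S in c..d, DLg S t s) ?_ ?_ ?_ s₀
  · exact continuous_param_integral2 (g := fun x p q => Lg x q p) (cont3_swap23 hL)
  · exact continuous_param_integral2 (g := fun x p q => DLg x q p) (cont3_swap23 hDL)
  · intro s t
    exact hasDerivAt_param_integral (f := fun y S => Lg S t y) (f' := fun y S => DLg S t y)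
      (cont3_slice_mid hL t) (cont3_slice_mid hDL t) (fun x τ => hd τ t x) s

/-- A double integral of a `t`-derivative vanishes when the potential vanishes at the
endpoints in `t`. -/
theorem double_integral_tderiv_zero {A DA : ℝ → ℝ → ℝ → ℝ} {a b c d : ℝ}
    (hA : Continuous fun p : ℝ × ℝ × ℝ => A p.1 p.2.1 p.2.2)
    (hDA : Continuous fun p : ℝ × ℝ × ℝ => DA p.1 p.2.1 p.2.2)
    (hd : ∀ S t, HasDerivAt (fun t' => A S t' 0) (DA S t 0) t)
    (h1 : ∀ S, A S a 0 = 0) (h2 : ∀ S, A S b 0 = 0) :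
    ∫ t in a..b, ∫ S in c..d, DA S t 0 = 0 := by
  have hA1 : ∀ t, HasDerivAt (fun t' => ∫ S in c..d, A S t' 0)
      (∫ S in c..d, DA S t 0) t := fun t =>
    hasDerivAt_param_integral (f := fun y S => A S y 0) (f' := fun y S => DA S y 0)
      (cont3_flip12 hA 0) (cont3_flip12 hDA 0) (fun x τ => hd τ x) t
  have hcont : Continuous fun t => ∫ S in c..d, DA S t 0 :=
    (continuous_param_integral2 (g := DA) hDA).comp
      (by fun_prop : Continuous fun t : ℝ => (t, (0 : ℝ)))
  rw [intervalIntegral.integral_eq_sub_of_hasDerivAt (fun t _ => hA1 t)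
    (hcont.intervalIntegrable a b)]
  have z1 : ∫ S in c..d, A S a 0 = 0 := by
    rw [intervalIntegral.integral_congr (g := fun _ => (0 : ℝ)) (fun S _ => h1 S)]
    simp
  have z2 : ∫ S in c..d, A S b 0 = 0 := by
    rw [intervalIntegral.integral_congr (g := fun _ => (0 : ℝ)) (fun S _ => h2 S)]
    simp
  rw [z1, z2, sub_zero]

/-- An integral of an `S`-derivative vanishes when the potential vanishes at the
endpoints in `S`. -/
theorem integral_Sderiv_zero {B DB : ℝ → ℝ → ℝ → ℝ} {c d : ℝ}
    (hDB : Continuous fun p : ℝ × ℝ × ℝ => DB p.1 p.2.1 p.2.2)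
    (hd : ∀ S t, HasDerivAt (fun S' => B S' t 0) (DB S t 0) S)
    (hzc : ∀ t, B c t 0 = 0) (hzd : ∀ t, B d t 0 = 0) (t : ℝ) :
    ∫ S in c..d, DB S t 0 = 0 := by
  rw [intervalIntegral.integral_eq_sub_of_hasDerivAt (fun S _ => hd S t)
    ((cont3_slice1 hDB t 0).intervalIntegrable c d), hzc t, hzd t, sub_zero]

end Adapters

end Stmt11

open Stmt11 in
/-- Stationarity of the Timoshenko action at equilibrium: if a smooth family of
placements `φ(S,t,s)` and rotations `R(S,t,s)` satisfies, at `s = 0`, the equilibrium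
equations, is `s`-independent at the extreme times `t₁, t₂`, and satisfies the boundary
conditions at `S = 0, L`, then the action `s ↦ 𝒮(s)` has vanishing derivative at
`s = 0`. -/
theorem stmt11 (L t₁ t₂ ρA : ℝ) (hρA : 0 < ρA)
    (G H J : Matrix (Fin 3) (Fin 3) ℝ) (hG : Gᵀ = G) (hH : Hᵀ = H) (hJ : Jᵀ = J)
    (φ : ℝ → ℝ → ℝ → Fin 3 → ℝ)
    (R : ℝ → ℝ → ℝ → Matrix (Fin 3) (Fin 3) ℝ)
    (hφ : ContDiff ℝ (⊤ : ℕ∞) (fun p : ℝ × ℝ × ℝ => φ p.1 p.2.1 p.2.2))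
    (hR : ContDiff ℝ (⊤ : ℕ∞) (fun p : ℝ × ℝ × ℝ => R p.1 p.2.1 p.2.2))
    (hSO : ∀ S t s, (R S t s)ᵀ * R S t s = 1 ∧ (R S t s).det = 1)
    -- the strain in the moving frame `ε = R⁻¹ ∂φ/∂S − e₃`
    (ε : ℝ → ℝ → ℝ → Fin 3 → ℝ)
    (hε : ∀ S t s, ε S t s
      = (R S t s)⁻¹.mulVec (deriv (fun S' => φ S' t s) S) - ![0, 0, 1])
    -- the curvature in the moving frame `κ = j(R⁻¹ ∂R/∂S)`
    (κ : ℝ → ℝ → ℝ → Fin 3 → ℝ)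
    (hκ : ∀ S t s, κ S t s = jmap ((R S t s)⁻¹ * deriv (fun S' => R S' t s) S))
    -- the spin in the moving frame `ω = j(R⁻¹ ∂R/∂t)`
    (ω : ℝ → ℝ → ℝ → Fin 3 → ℝ)
    (hω : ∀ S t s, ω S t s = jmap ((R S t s)⁻¹ * deriv (fun t' => R S t' s) t))
    -- (a) equilibrium equations at `s = 0`:
    -- `∂/∂S (R G (R⁻¹ ∂φ/∂S − e₃)) = ρA ∂²φ/∂t²`
    (heq1 : ∀ S t, deriv (fun S' => (R S' t 0).mulVec (G.mulVec (ε S' t 0))) S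
      = ρA • deriv (fun t' => deriv (fun t'' => φ S t'' 0) t') t)
    -- `∂/∂S (R H j(R⁻¹ ∂R/∂S)) + ∂φ/∂S × (R G (R⁻¹ ∂φ/∂S − e₃)) = ∂/∂t (R J j(R⁻¹ ∂R/∂t))`
    (heq2 : ∀ S t, deriv (fun S' => (R S' t 0).mulVec (H.mulVec (κ S' t 0))) S
        + deriv (fun S' => φ S' t 0) S ⨯₃ (R S t 0).mulVec (G.mulVec (ε S t 0))
      = deriv (fun t' => (R S t' 0).mulVec (J.mulVec (ω S t' 0))) t)
    -- (b) `φ` and `R` are independent of `s` at `t = t₁` and `t = t₂`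
    (hb : ∀ S s, φ S t₁ s = φ S t₁ 0 ∧ R S t₁ s = R S t₁ 0
      ∧ φ S t₂ s = φ S t₂ 0 ∧ R S t₂ s = R S t₂ 0)
    -- (c) boundary conditions at `S = 0` and `S = L`, for all `t`
    (hc1 : ∀ t, ∀ S ∈ ({0, L} : Set ℝ),
      deriv (fun s' => φ S t s') 0 ⬝ᵥ (R S t 0).mulVec (G.mulVec (ε S t 0)) = 0)
    (hc2 : ∀ t, ∀ S ∈ ({0, L} : Set ℝ),
      jmap ((R S t 0)⁻¹ * deriv (fun s' => R S t s') 0) ⬝ᵥ H.mulVec (κ S t 0) = 0)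
    -- the action
    (act : ℝ → ℝ)
    (hact : ∀ s, act s = ∫ t in t₁..t₂, ∫ S in (0:ℝ)..L,
      (1 / 2) * (ρA * (deriv (fun t' => φ S t' s) t ⬝ᵥ deriv (fun t' => φ S t' s) t)
        + ω S t s ⬝ᵥ J.mulVec (ω S t s)
        - ε S t s ⬝ᵥ G.mulVec (ε S t s)
        - κ S t s ⬝ᵥ H.mulVec (κ S t s))) :
    HasDerivAt act 0 0 := by
  have hφ' : ContDiff ℝ (⊤ : ℕ∞) (uc φ) := hφ
  have hR' : ContDiff ℝ (⊤ : ℕ∞) (uc R) := hR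
  have hRT : ∀ S t s, (R S t s)⁻¹ = (R S t s)ᵀ := fun S t s =>
    Matrix.inv_eq_left_inv (hSO S t s).1
  -- identification of the fields
  have hεe : ∀ S t s, ε S t s = eps φ R S t s := by
    intro S t s
    rw [hε, hRT, (hasDerivAt_pd1 hφ' S t s).deriv]
    rfl
  have hκe : ∀ S t s, κ S t s = kap R S t s := by
    intro S t s
    rw [hκ, hRT]
    exact congrArg (fun M => jmap ((R S t s)ᵀ * M)) (hasDerivAt_pd1 hR' S t s).deriv
  have hωe : ∀ S t s, ω S t s = om R S t s := by
    intro S t s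
    rw [hω, hRT]
    exact congrArg (fun M => jmap ((R S t s)ᵀ * M)) (hasDerivAt_pd2 hR' S t s).deriv
  -- translation of the equilibrium equations
  have heq1' : ∀ S t, Dnf φ R G S t 0 = ρA • pd d2 (pd d2 φ) S t 0 := by
    intro S t
    have h1 : (fun S' => (R S' t 0).mulVec (G.mulVec (ε S' t 0)))
        = fun S' => nf φ R G S' t 0 := funext fun S' => by rw [hεe]; rfl
    have h2 : deriv (fun S' => (R S' t 0).mulVec (G.mulVec (ε S' t 0))) S
        = Dnf φ R G S t 0 := by
      rw [h1]; exact (hasDerivAt_nf1 G hφ' hR' S t 0).deriv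
    have h3 : (fun t' => deriv (fun t'' => φ S t'' 0) t')
        = fun t' => pd d2 φ S t' 0 := funext fun t' => (hasDerivAt_pd2 hφ' S t' 0).deriv
    have h4 : deriv (fun t' => deriv (fun t'' => φ S t'' 0) t') t
        = pd d2 (pd d2 φ) S t 0 := by
      rw [h3]; exact (hasDerivAt_pd2 (contDiff_uc_pd hφ' d2) S t 0).deriv
    rw [← h2, heq1 S t, h4]
  have heq2' : ∀ S t, Dmf R H S t 0 + pd d1 φ S t 0 ⨯₃ nf φ R G S t 0 = Dpf R J S t 0 := by
    intro S t
    have h1 : (fun S' => (R S' t 0).mulVec (H.mulVec (κ S' t 0)))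
        = fun S' => R S' t 0 *ᵥ (H *ᵥ kap R S' t 0) := funext fun S' => by rw [hκe]
    have h2 : deriv (fun S' => (R S' t 0).mulVec (H.mulVec (κ S' t 0))) S
        = Dmf R H S t 0 := by
      rw [h1]; exact (hasDerivAt_mf1 H hR' S t 0).deriv
    have h3 : (fun t' => (R S t' 0).mulVec (J.mulVec (ω S t' 0)))
        = fun t' => R S t' 0 *ᵥ (J *ᵥ om R S t' 0) := funext fun t' => by rw [hωe]
    have h4 : deriv (fun t' => (R S t' 0).mulVec (J.mulVec (ω S t' 0))) t
        = Dpf R J S t 0 := by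
      rw [h3]; exact (hasDerivAt_pf2 J hR' S t 0).deriv
    have h5 : deriv (fun S' => φ S' t 0) S = pd d1 φ S t 0 :=
      (hasDerivAt_pd1 hφ' S t 0).deriv
    have h6 : (R S t 0).mulVec (G.mulVec (ε S t 0)) = nf φ R G S t 0 := by rw [hεe]; rfl
    rw [← h2, ← h4, ← h5, ← h6]
    exact heq2 S t
  -- rewriting the action with the smooth Lagrangian
  have hact' : act = fun s => ∫ t in t₁..t₂, ∫ S in (0:ℝ)..L, Lag φ R G H J ρA S t s := by
    funext s
    rw [hact]
    refine intervalIntegral.integral_congr fun t _ => ?_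
    refine intervalIntegral.integral_congr fun S _ => ?_
    have hφt : deriv (fun t' => φ S t' s) t = pd d2 φ S t s :=
      (hasDerivAt_pd2 hφ' S t s).deriv
    rw [hεe, hκe, hωe, hφt]
    rfl
  -- continuity facts
  have contL : Continuous fun p : ℝ × ℝ × ℝ => Lag φ R G H J ρA p.1 p.2.1 p.2.2 :=
    (contDiff_Lag G H J ρA hφ' hR').continuous
  have contDL : Continuous fun p : ℝ × ℝ × ℝ => DLag φ R G H J ρA p.1 p.2.1 p.2.2 :=
    (contDiff_DLag G H J ρA hφ' hR').continuous
  have contAf : Continuous fun p : ℝ × ℝ × ℝ => Af φ R J ρA p.1 p.2.1 p.2.2 :=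
    (contDiff_Af J ρA hφ' hR').continuous
  have contDAf : Continuous fun p : ℝ × ℝ × ℝ => DAf φ R J ρA p.1 p.2.1 p.2.2 :=
    (contDiff_DAf J ρA hφ' hR').continuous
  have contDBf : Continuous fun p : ℝ × ℝ × ℝ => DBf φ R G H p.1 p.2.1 p.2.2 :=
    (contDiff_DBf G H hφ' hR').continuous
  -- the derivative of the action
  have hmain : HasDerivAt act
      (∫ t in t₁..t₂, ∫ S in (0:ℝ)..L, DLag φ R G H J ρA S t 0) 0 := by
    rw [hact']
    exact hasDerivAt_double_integral contL contDL
      (fun S t s => hasDerivAt_Lag3 G H J ρA hφ' hR' S t s) 0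
  -- the derivative vanishes
  have hz : (∫ t in t₁..t₂, ∫ S in (0:ℝ)..L, DLag φ R G H J ρA S t 0) = 0 := by
    have hpt := pointwise_identity hφ' hR' hSO hG hH hJ heq1' heq2'
    -- boundary term in S vanishes
    have hφs3 : ∀ S t s, pd d3 φ S t s = deriv (fun s' => φ S t s') s :=
      fun S t s => ((hasDerivAt_pd3 hφ' S t s).deriv).symm
    have hRs3 : ∀ S t s, pd d3 R S t s = deriv (fun s' => R S t s') s :=
      fun S t s => ((hasDerivAt_pd3 hR' S t s).deriv).symm
    have hBzero : ∀ t, ∀ S ∈ ({0, L} : Set ℝ), Bf φ R G H S t 0 = 0 := by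
      intro t S hS
      have h1 := hc1 t S hS
      have h2 := hc2 t S hS
      rw [hεe] at h1
      rw [hκe, hRT] at h2
      show Bf φ R G H S t 0 = 0
      simp only [Bf, nf, wf]
      rw [hφs3, hRs3, h1, h2]
      norm_num
    have hB : ∀ t, ∫ S in (0:ℝ)..L, DBf φ R G H S t 0 = 0 :=
      integral_Sderiv_zero (B := Bf φ R G H) contDBf
        (fun S t => hasDerivAt_Bf1 G H hφ' hR' S t 0)
        (fun t => hBzero t 0 (by simp)) (fun t => hBzero t L (by simp))
    -- the A-term vanishes at the extreme times
    have hAzero : ∀ S t', (t' = t₁ ∨ t' = t₂) → Af φ R J ρA S t' 0 = 0 := by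
      intro S t' ht'
      have hφs : pd d3 φ S t' 0 = 0 := by
        have h1 : (fun s' => φ S t' s') = fun _ => φ S t' 0 := by
          funext s
          rcases ht' with h | h <;> subst h
          · exact (hb S s).1
          · exact (hb S s).2.2.1
        have hd := hasDerivAt_pd3 hφ' S t' 0
        rw [h1] at hd
        exact hd.unique (hasDerivAt_const 0 _)
      have hRs : pd d3 R S t' 0 = 0 := by
        have h1 : (fun s' => R S t' s') = fun _ => R S t' 0 := by
          funext s
          rcases ht' with h | h <;> subst h
          · exact (hb S s).2.1
          · exact (hb S s).2.2.2
        have hd := hasDerivAt_pd3 hR' S t' 0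
        rw [h1] at hd
        exact hd.unique (hasDerivAt_const 0 _)
      show Af φ R J ρA S t' 0 = 0
      simp only [Af, wf]
      rw [hφs, hRs, Matrix.mul_zero, jmap_zero, dotProduct_zero,
        zero_dotProduct, mul_zero, add_zero]
    have hinner : ∀ t, ∫ S in (0:ℝ)..L, DLag φ R G H J ρA S t 0
        = ∫ S in (0:ℝ)..L, DAf φ R J ρA S t 0 := by
      intro t
      rw [intervalIntegral.integral_congr (g := fun S => DAf φ R J ρA S t 0
          - DBf φ R G H S t 0) (fun S _ => hpt S t)]
      rw [intervalIntegral.integral_sub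
        ((cont3_slice1 contDAf t 0).intervalIntegrable 0 L)
        ((cont3_slice1 contDBf t 0).intervalIntegrable 0 L)]
      rw [hB t, sub_zero]
    rw [intervalIntegral.integral_congr (g := fun t => ∫ S in (0:ℝ)..L, DAf φ R J ρA S t 0)
      (fun t _ => hinner t)]
    exact double_integral_tderiv_zero contAf contDAf
      (fun S t => hasDerivAt_Af2 J ρA hφ' hR' S t 0)
      (fun S => hAzero S t₁ (Or.inl rfl)) (fun S => hAzero S t₂ (Or.inr rfl))
  rw [hz] at hmain
  exact hmain
end
end

section
/- Legendre duality relation: let R ∈ SO(3), V_φ ∈ ℝ³, let V_R be a real 3×3 matrix with R⁻¹·V_R skew-symmetric, let A, J, G, H be symmetric real 3×3 matrices with J invertible, and let ε, κ ∈ ℝ³. Define the momenta p_φ = A·V_φ and p_R = R·j⁻¹(J·j(R⁻¹·V_R)), the Lagrangian density ℓ = (1/2)(⟨V_φ, A·V_φ⟩ + ⟨j(R⁻¹·V_R), J·j(R⁻¹·V_R)⟩ − ⟨ε, G·ε⟩ − ⟨κ, H·κ⟩) and the Hamiltonian density h = (1/2)(⟨p_φ, A⁻¹·p_φ⟩ +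 ⟨J⁻¹·(J·j(R⁻¹·V_R)), J·j(R⁻¹·V_R)⟩ + ⟨ε, G·ε⟩ + ⟨κ, H·κ⟩), where additionally A is invertible. Then ⟨p_φ, V_φ⟩ + (1/2)·Tr(p_Rᵀ · V_R) = ℓ + h. -/
open Matrix

noncomputable section

/-- The inverse of `j`, sending `u ∈ ℝ³` to the skew-symmetric matrix `B` with
`B·w = u × w` for all `w`. -/
def jinv (u : Fin 3 → ℝ) : Matrix (Fin 3) (Fin 3) ℝ :=
  !![0, -u 2, u 1; u 2, 0, -u 0; -u 1, u 0, 0]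

/-- Legendre duality relation between the Lagrangian and Hamiltonian densities of the
Timoshenko beam: `g(p, V) = ℓ + h` pointwise. -/
theorem stmt13 (R : Matrix (Fin 3) (Fin 3) ℝ) (hR : Rᵀ * R = 1 ∧ R.det = 1)
    (Vφ : Fin 3 → ℝ) (VR : Matrix (Fin 3) (Fin 3) ℝ) (hVR : (R⁻¹ * VR)ᵀ = -(R⁻¹ * VR))
    (A J G H : Matrix (Fin 3) (Fin 3) ℝ)
    (hA : Aᵀ = A) (hJ : Jᵀ = J) (hG : Gᵀ = G) (hH : Hᵀ = H)
    (hJinv : IsUnit J.det) (hAinv : IsUnit A.det)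
    (ε κ : Fin 3 → ℝ)
    (pφ : Fin 3 → ℝ) (hpφ : pφ = A.mulVec Vφ)
    (pR : Matrix (Fin 3) (Fin 3) ℝ) (hpR : pR = R * jinv (J.mulVec (jmap (R⁻¹ * VR))))
    (ℓ h : ℝ)
    (hℓ : ℓ = (1 / 2) * (Vφ ⬝ᵥ A.mulVec Vφ + jmap (R⁻¹ * VR) ⬝ᵥ J.mulVec (jmap (R⁻¹ * VR))
      - ε ⬝ᵥ G.mulVec ε - κ ⬝ᵥ H.mulVec κ))
    (hh : h = (1 / 2) * (pφ ⬝ᵥ A⁻¹.mulVec pφ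
      + J⁻¹.mulVec (J.mulVec (jmap (R⁻¹ * VR))) ⬝ᵥ J.mulVec (jmap (R⁻¹ * VR))
      + ε ⬝ᵥ G.mulVec ε + κ ⬝ᵥ H.mulVec κ)) :
    pφ ⬝ᵥ Vφ + (1 / 2) * ((pRᵀ * VR).trace) = ℓ + h := by

  obtain ⟨hRo, hRd⟩ := hR
  have hRinv : R⁻¹ = Rᵀ := Matrix.inv_eq_left_inv hRo
  set S := R⁻¹ * VR with hS
  set s : Fin 3 → ℝ := jmap S with hs
  set m : Fin 3 → ℝ := J.mulVec s with hm
  have hskew : ∀ i j, S j i = - S i j := by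
    intro i j
    have := congrFun (congrFun hVR i) j
    simpa [Matrix.transpose_apply, Matrix.neg_apply] using this
  have h1 : pφ ⬝ᵥ Vφ = Vφ ⬝ᵥ A.mulVec Vφ := by
    rw [hpφ, dotProduct_comm, Matrix.dotProduct_mulVec, ← Matrix.mulVec_transpose, hA]
  have h2 : pφ ⬝ᵥ A⁻¹.mulVec pφ = Vφ ⬝ᵥ A.mulVec Vφ := by
    conv_lhs => rw [hpφ, Matrix.mulVec_mulVec, Matrix.nonsing_inv_mul A hAinv,
      Matrix.one_mulVec]
    rw [hpφ] at h1
    exact h1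
  have h3 : J⁻¹.mulVec (J.mulVec s) = s := by
    rw [Matrix.mulVec_mulVec, Matrix.nonsing_inv_mul J hJinv, Matrix.one_mulVec]
  have h4 : (pRᵀ * VR).trace = 2 * (s ⬝ᵥ m) := by
    have hpR' : pRᵀ * VR = (jinv m)ᵀ * S := by
      rw [hpR, Matrix.transpose_mul, Matrix.mul_assoc, ← hRinv, hS]
    rw [hpR', Matrix.trace_fin_three]
    simp only [Matrix.mul_apply, Fin.sum_univ_three, Matrix.transpose_apply, jinv,
      Matrix.cons_val', Matrix.cons_val_zero, Matrix.cons_val_one, Matrix.head_cons,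
      Matrix.empty_val', Matrix.cons_val_fin_one, Matrix.head_fin_const,
      Matrix.cons_val_two, Matrix.tail_cons, Matrix.of_apply]
    have e1 := hskew 0 1
    have e2 := hskew 0 2
    have e3 := hskew 1 2
    simp only [hs, jmap, dotProduct, Fin.sum_univ_three, Matrix.cons_val_zero,
      Matrix.cons_val_one, Matrix.head_cons, Matrix.cons_val_two, Matrix.tail_cons]
    rw [e1, e2, e3]
    ring
  have h5 : s ⬝ᵥ m = s ⬝ᵥ J.mulVec s := rfl
  rw [hℓ, hh, h1, h2, h3, h4, h5]
  ring
end
end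

section
/- Derivative of the shear-extension energy with respect to the rotation: let G be a symmetric real 3×3 matrix, c ∈ ℝ³ a fixed vector, and define K(R) = (1/2)·⟨Rᵀ·c − e₃, G·(Rᵀ·c − e₃)⟩ for R ∈ SO(3), where e₃ = (0,0,1). Then for every R ∈ SO(3) and every real 3×3 skew-symmetric matrix Σ, the directional derivative satisfies d/ds|_{s=0} K(R·exp(sΣ)) = −⟨j(Σ), (Rᵀ·c) × (G·(Rᵀ·c − e₃))⟩. -/
open Matrix

noncomputable section

private lemma dot_hasDerivAt (f g : ℝ → Fin 3 → ℝ) (f' g' : Fin 3 → ℝ) (x : ℝ)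
    (hf : HasDerivAt f f' x) (hg : HasDerivAt g g' x) :
    HasDerivAt (fun s => f s ⬝ᵥ g s) (f' ⬝ᵥ g x + f x ⬝ᵥ g') x := by
  have hfi := hasDerivAt_pi.mp hf
  have hgi := hasDerivAt_pi.mp hg
  have h : HasDerivAt (fun s => ∑ i : Fin 3, f s i * g s i)
      (∑ i : Fin 3, (f' i * g x i + f x i * g' i)) x :=
    HasDerivAt.fun_sum fun i _ => (hfi i).mul (hgi i)
  simpa [dotProduct, Finset.sum_add_distrib] using h

private lemma mulVec_hasDerivAt (G : Matrix (Fin 3) (Fin 3) ℝ) (f : ℝ → Fin 3 → ℝ)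
    (f' : Fin 3 → ℝ) (x : ℝ) (hf : HasDerivAt f f' x) :
    HasDerivAt (fun s => G.mulVec (f s)) (G.mulVec f') x := by
  have hfi := hasDerivAt_pi.mp hf
  refine hasDerivAt_pi.mpr fun i => ?_
  have h : HasDerivAt (fun s => ∑ j : Fin 3, G i j * f s j)
      (∑ j : Fin 3, G i j * f' j) x :=
    HasDerivAt.fun_sum fun j _ => (hfi j).const_mul (G i j)
  simpa [Matrix.mulVec, dotProduct] using h

/-- Derivative of the shear-extension strain energy with respect to the rotation:
for `K(R) = ½⟨Rᵀc − e₃, G(Rᵀc − e₃)⟩`, the directional derivative along `R·exp(sΣ)`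
equals `−⟨j(Σ), (Rᵀc) × (G(Rᵀc − e₃))⟩`. -/
theorem stmt14 (G : Matrix (Fin 3) (Fin 3) ℝ) (hG : Gᵀ = G) (c : Fin 3 → ℝ)
    (K : Matrix (Fin 3) (Fin 3) ℝ → ℝ)
    (hK : ∀ R, K R = (1 / 2) * ((Rᵀ.mulVec c - ![0, 0, 1]) ⬝ᵥ
      G.mulVec (Rᵀ.mulVec c - ![0, 0, 1])))
    (R Sig : Matrix (Fin 3) (Fin 3) ℝ)
    (hR : Rᵀ * R = 1 ∧ R.det = 1) (hSig : Sigᵀ = -Sig) :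
    HasDerivAt (fun s : ℝ => K (R * NormedSpace.exp (s • Sig)))
      (-(jmap Sig ⬝ᵥ (Rᵀ.mulVec c ⨯₃ G.mulVec (Rᵀ.mulVec c - ![0, 0, 1])))) 0 := by
  classical
  letI : SeminormedRing (Matrix (Fin 3) (Fin 3) ℝ) := Matrix.linftyOpSemiNormedRing
  letI : NormedRing (Matrix (Fin 3) (Fin 3) ℝ) := Matrix.linftyOpNormedRing
  letI : NormedAlgebra ℝ (Matrix (Fin 3) (Fin 3) ℝ) := Matrix.linftyOpNormedAlgebra
  -- derivative of the exponential curve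
  have hexp : HasDerivAt (fun s : ℝ => NormedSpace.exp (s • Sig)) Sig 0 := by
    have h := hasDerivAt_exp_smul_const (𝕂 := ℝ) Sig 0
    simp at h; exact h
  have hM : HasDerivAt (fun s : ℝ => R * NormedSpace.exp (s • Sig)) (R * Sig) 0 :=
    hexp.const_mul R
  -- the curve of strains
  set e : Fin 3 → ℝ := ![0, 0, 1] with he
  set a : Fin 3 → ℝ := Rᵀ.mulVec c with ha
  set v' : Fin 3 → ℝ := (R * Sig)ᵀ.mulVec c with hv'
  let L : Matrix (Fin 3) (Fin 3) ℝ →ₗ[ℝ] (Fin 3 → ℝ) :=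
    { toFun := fun A => Aᵀ.mulVec c
      map_add' := fun A B => by simp [Matrix.transpose_add, Matrix.add_mulVec]
      map_smul' := fun r A => by simp [Matrix.transpose_smul, Matrix.smul_mulVec]
    }
  have hu : HasDerivAt (fun s : ℝ => (R * NormedSpace.exp (s • Sig))ᵀ.mulVec c) v' 0 := by
    exact L.toContinuousLinearMap.hasFDerivAt.comp_hasDerivAt 0 hM
  have hW : HasDerivAt (fun s : ℝ => (R * NormedSpace.exp (s • Sig))ᵀ.mulVec c - e) v' 0 :=
    hu.sub_const e
  have hGW : HasDerivAt (fun s : ℝ => G.mulVec ((R * NormedSpace.exp (s • Sig))ᵀ.mulVec c - e))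
      (G.mulVec v') 0 := mulVec_hasDerivAt G _ _ _ hW
  have hW0 : (R * NormedSpace.exp ((0:ℝ) • Sig))ᵀ.mulVec c - e = a - e := by
    simp [ha, NormedSpace.exp_zero]
  have hq : HasDerivAt (fun s : ℝ =>
      ((R * NormedSpace.exp (s • Sig))ᵀ.mulVec c - e) ⬝ᵥ
        G.mulVec ((R * NormedSpace.exp (s • Sig))ᵀ.mulVec c - e))
      (v' ⬝ᵥ G.mulVec (a - e) + (a - e) ⬝ᵥ G.mulVec v') 0 := by
    have := dot_hasDerivAt _ _ _ _ _ hW hGW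
    rwa [hW0] at this
  -- symmetry of G
  have hsymm : (a - e) ⬝ᵥ G.mulVec v' = v' ⬝ᵥ G.mulVec (a - e) := by
    rw [dotProduct_mulVec, ← Matrix.mulVec_transpose, hG, dotProduct_comm]
  have hfin : HasDerivAt (fun s : ℝ => K (R * NormedSpace.exp (s • Sig)))
      ((1 / 2) * (v' ⬝ᵥ G.mulVec (a - e) + (a - e) ⬝ᵥ G.mulVec v')) 0 := by
    have h := hq.const_mul (1 / 2 : ℝ)
    exact h.congr_of_eventuallyEq (Filter.Eventually.of_forall fun s => hK _)
  rw [hsymm] at hfin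
  have hval : (1 / 2 : ℝ) * (v' ⬝ᵥ G.mulVec (a - e) + v' ⬝ᵥ G.mulVec (a - e))
      = v' ⬝ᵥ G.mulVec (a - e) := by ring
  rw [hval] at hfin
  -- algebraic identity
  have hveq : v' = (-Sig).mulVec a := by
    rw [hv', Matrix.transpose_mul, ← Matrix.mulVec_mulVec, hSig, ha]
  have halg : v' ⬝ᵥ G.mulVec (a - e) = -(jmap Sig ⬝ᵥ (a ⨯₃ G.mulVec (a - e))) := by
    rw [hveq]
    set u : Fin 3 → ℝ := G.mulVec (a - e)
    have h00 : Sig 0 0 = 0 := by have := congr_fun (congr_fun hSig 0) 0; simp at this; linarith [this]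
    have h11 : Sig 1 1 = 0 := by have := congr_fun (congr_fun hSig 1) 1; simp at this; linarith [this]
    have h22 : Sig 2 2 = 0 := by have := congr_fun (congr_fun hSig 2) 2; simp at this; linarith [this]
    have h01 : Sig 0 1 = -Sig 1 0 := by have := congr_fun (congr_fun hSig 1) 0; simpa using this
    have h02 : Sig 0 2 = -Sig 2 0 := by have := congr_fun (congr_fun hSig 2) 0; simpa using this
    have h12 : Sig 1 2 = -Sig 2 1 := by have := congr_fun (congr_fun hSig 2) 1; simpa using this
    simp only [Matrix.mulVec, dotProduct, Matrix.neg_apply, jmap, crossProduct,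
      Fin.sum_univ_three, Matrix.cons_val_zero, Matrix.cons_val_one, Matrix.head_cons,
      LinearMap.mk₂_apply, Matrix.cons_val_two, Matrix.tail_cons, LinearMap.coe_mk,
      AddHom.coe_mk]
    rw [h00, h11, h22, h01, h02, h12]
    ring
  rwa [← halg]
end
end
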